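/- arXiv:2510.10929 — 5 statements merged into one kernel-verified Lean document; each statement's English description precedes it below -/
import Mathlib

section
/- Under any weighted proportional sharing rule WPS^w with strictly positive weights, for every POT policy T ∈ Γ and every retailer i ∈ N, the following are equivalent: (1) there exists z ∈ ℤ_{>0} with f_i(2^z·T_i; T_{-i}) < f_i(T_i; T_{-i}); (2) f_i(2T_i; T_{-i}) < f_i(T_i; T_{-i}); (3) T_i < sqrt( (K_i + (w_i / Σ_{j ∈ N[T_i;T_{-i}]} w_j)·K_0) / (2·H_i) ). -/
open Finset

noncomputable section

/-- `t` is a power-of-two (POT) value with base period `B`. -/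
def IsPOT (B t : ℝ) : Prop := ∃ z : ℤ, t = (2 : ℝ) ^ z * B

/-- Membership of an interval `t` in retailer `i`'s strategy set `Γ_i`,
given major setup cost `K0`, minor setup cost `Ki` and holding parameter `Hi`. -/
def InStrategy (B K0 Ki Hi t : ℝ) : Prop :=
  IsPOT B t ∧ Real.sqrt (Ki / (2 * Hi)) ≤ t ∧ t ≤ Real.sqrt (2 * (K0 + Ki) / Hi)

/-- `N[τ; T_{-i}] = {i} ∪ {j : T j ≤ τ}`. -/
def grp {n : ℕ} (T : Fin n → ℝ) (i : Fin n) (τ : ℝ) : Finset (Fin n) :=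
  insert i (Finset.univ.filter fun j => T j ≤ τ)

/-- The set of levels `L(T) = {T j : j ∈ N}`. -/
def levels {n : ℕ} (T : Fin n → ℝ) : Finset ℝ := Finset.image T Finset.univ

/-- `1/τ⁺`: the inverse of the smallest level larger than `τ`, with the
convention that it is `0` when no larger level exists. -/
def invSucc (L : Finset ℝ) (τ : ℝ) : ℝ :=
  if h : (L.filter fun u => τ < u).Nonempty then 1 / (L.filter fun u => τ < u).min' h
  else 0

/-- Major-setup share `x_i(T)` of retailer `i` under the weighted proportional
sharing rule with weights `w` (intended for strictly positive weights). -/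
def share {n : ℕ} (K0 : ℝ) (w T : Fin n → ℝ) (i : Fin n) : ℝ :=
  ∑ τ ∈ (levels T).filter (fun τ => T i ≤ τ),
    (1 / τ - invSucc (levels T) τ) *
      (w i / ∑ j ∈ Finset.univ.filter (fun j => T j ≤ τ), w j) * K0

/-- Major-setup share for nonnegative weights: if the order group has total
weight zero, the major setup cost is split equally among its members. -/
def shareZ {n : ℕ} (K0 : ℝ) (w T : Fin n → ℝ) (i : Fin n) : ℝ :=
  ∑ τ ∈ (levels T).filter (fun τ => T i ≤ τ),
    (1 / τ - invSucc (levels T) τ) *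
      (if 0 < ∑ j ∈ Finset.univ.filter (fun j => T j ≤ τ), w j
        then w i / ∑ j ∈ Finset.univ.filter (fun j => T j ≤ τ), w j
        else 1 / ((Finset.univ.filter fun j => T j ≤ τ) : Finset (Fin n)).card) * K0

/-- Individual cost `f_i(T) = H_i T_i + K_i / T_i + x_i(T)` under `WPS^w`. -/
def indCost {n : ℕ} (K0 : ℝ) (K H w : Fin n → ℝ) (T : Fin n → ℝ) (i : Fin n) : ℝ :=
  H i * T i + K i / T i + share K0 w T i

/-- Individual cost under the zero-weight-tolerant sharing rule. -/
def indCostZ {n : ℕ} (K0 : ℝ) (K H w : Fin n → ℝ) (T : Fin n → ℝ) (i : Fin n) : ℝ :=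
  H i * T i + K i / T i + shareZ K0 w T i

/-- System cost `C(T)`. -/
def sysCost {n : ℕ} (K0 : ℝ) (K H : Fin n → ℝ) (T : Fin n → ℝ) : ℝ :=
  (∑ i, (H i * T i + K i / T i)) + K0 / (⨅ i, T i)

/-- Nash equilibrium of the game induced by `WPS^w`. -/
def IsNE {n : ℕ} (B K0 : ℝ) (K H w : Fin n → ℝ) (T : Fin n → ℝ) : Prop :=
  (∀ i, InStrategy B K0 (K i) (H i) (T i)) ∧
  ∀ i t, InStrategy B K0 (K i) (H i) t →
    indCost K0 K H w T i ≤ indCost K0 K H w (Function.update T i t) i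

/-- Nash equilibrium for the zero-weight-tolerant sharing rule. -/
def IsNEZ {n : ℕ} (B K0 : ℝ) (K H w : Fin n → ℝ) (T : Fin n → ℝ) : Prop :=
  (∀ i, InStrategy B K0 (K i) (H i) (T i)) ∧
  ∀ i t, InStrategy B K0 (K i) (H i) t →
    indCostZ K0 K H w T i ≤ indCostZ K0 K H w (Function.update T i t) i

/-- `s = min_{∅ ⊂ S ⊆ N} (K0 + Σ_{i∈S} K_i)/(Σ_{i∈S} H_i)`. -/
def sval (n : ℕ) (K0 : ℝ) (K H : Fin n → ℝ) : ℝ :=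
  sInf ((fun S : Finset (Fin n) => (K0 + ∑ i ∈ S, K i) / ∑ i ∈ S, H i) '' {S | S.Nonempty})

/-- `[b]_POT`: the POT value `a` with `b/√2 < a ≤ √2·b`. -/
def potRound (B b : ℝ) : ℝ := (2 : ℝ) ^ (round (Real.logb 2 (b / B))) * B

/-- The optimal centralized POT policy `T^c`. -/
def Tc (n : ℕ) (B K0 : ℝ) (K H : Fin n → ℝ) (i : Fin n) : ℝ :=
  if K i ≤ sval n K0 K H * H i then potRound B (Real.sqrt (sval n K0 K H))
  else potRound B (Real.sqrt (K i / H i))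

end

private lemma pot_pos {B t : ℝ} (hB : 0 < B) (h : IsPOT B t) : 0 < t := by
  obtain ⟨z, rfl⟩ := h; positivity

private lemma pot_gap {B s t : ℝ} (hB : 0 < B) (hs : IsPOT B s) (ht : IsPOT B t)
    (hlt : s < t) : 2 * s ≤ t := by
  obtain ⟨a, rfl⟩ := hs
  obtain ⟨b, rfl⟩ := ht
  have hab : a + 1 ≤ b := by
    by_contra hcon
    push_neg at hcon
    have hba : b ≤ a := by omega
    have h2 : (2:ℝ) ^ b ≤ (2:ℝ) ^ a := zpow_le_zpow_right₀ one_le_two hba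
    nlinarith
  have h3 : (2:ℝ) ^ (a+1) ≤ (2:ℝ) ^ b := zpow_le_zpow_right₀ one_le_two hab
  have h2 : (2:ℝ) ^ (a+1) = 2 * 2 ^ a := by
    rw [zpow_add₀ (two_ne_zero), zpow_one]; ring
  nlinarith

private lemma levels_update {n : ℕ} (T : Fin n → ℝ) (i : Fin n) (a : ℝ) :
    levels (Function.update T i a) = insert a (Finset.image T (univ.erase i)) := by
  ext u
  simp only [levels, Finset.mem_image, Finset.mem_insert, Finset.mem_erase, Finset.mem_univ,
    true_and, and_true]
  constructor
  · rintro ⟨j, rfl⟩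
    by_cases h : j = i
    · subst h; left; rw [Function.update_self]
    · right; exact ⟨j, h, by rw [Function.update_of_ne h]⟩
  · rintro (rfl | ⟨j, hj, rfl⟩)
    · exact ⟨i, Function.update_self i u T⟩
    · exact ⟨j, Function.update_of_ne hj _ T⟩

private lemma share_step {n : ℕ} (K0 : ℝ) (w T : Fin n → ℝ) (i : Fin n) (τ : ℝ)
    (hτ : 0 < τ)
    (hgap : ∀ j, j ≠ i → τ < T j → 2 * τ ≤ T j) :
    share K0 w (Function.update T i τ) i
      = share K0 w (Function.update T i (2 * τ)) i
        + (1 / (2 * τ)) * (w i / ∑ j ∈ univ.filter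
            (fun j => Function.update T i τ j ≤ τ), w j) * K0 := by
  classical
  set M : Finset ℝ := Finset.image T (univ.erase i) with hM
  have hMgap : ∀ u ∈ M, τ < u → 2 * τ ≤ u := by
    intro u hu hlt
    obtain ⟨j, hj, rfl⟩ := Finset.mem_image.1 hu
    exact hgap j (Finset.mem_erase.1 hj).1 hlt
  set D : Finset ℝ := M.filter (fun u => 2 * τ ≤ u) with hD
  have hτD : τ ∉ D := by
    intro h
    have := (Finset.mem_filter.1 h).2
    linarith
  have hL1 : levels (Function.update T i τ) = insert τ M := levels_update T i τ
  have hL2 : levels (Function.update T i (2*τ)) = insert (2*τ) M := levels_update T i (2*τ)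
  have hF1 : (insert τ M).filter (fun u => τ ≤ u) = insert τ D := by
    ext u
    simp only [Finset.mem_filter, Finset.mem_insert, hD]
    constructor
    · rintro ⟨rfl | hu, hle⟩
      · exact Or.inl rfl
      · rcases eq_or_lt_of_le hle with rfl | hlt
        · exact Or.inl rfl
        · exact Or.inr ⟨hu, hMgap u hu hlt⟩
    · rintro (rfl | ⟨hu, hle⟩)
      · exact ⟨Or.inl rfl, le_refl _⟩
      · exact ⟨Or.inr hu, by linarith⟩
  have hF2 : (insert (2*τ) M).filter (fun u => 2*τ ≤ u) = insert (2*τ) D := by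
    ext u
    simp only [Finset.mem_filter, Finset.mem_insert, hD]
    constructor
    · rintro ⟨rfl | hu, hle⟩
      · exact Or.inl rfl
      · exact Or.inr ⟨hu, hle⟩
    · rintro (rfl | ⟨hu, hle⟩)
      · exact ⟨Or.inl rfl, le_refl _⟩
      · exact ⟨Or.inr hu, hle⟩
  have e1 : share K0 w (Function.update T i τ) i
      = ∑ u ∈ insert τ D, (1/u - invSucc (insert τ M) u) *
          (w i / ∑ j ∈ univ.filter (fun j => Function.update T i τ j ≤ u), w j) * K0 := by
    rw [share, hL1]
    simp only [Function.update_self]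
    rw [hF1]
  have e2 : share K0 w (Function.update T i (2*τ)) i
      = ∑ u ∈ insert (2*τ) D, (1/u - invSucc (insert (2*τ) M) u) *
          (w i / ∑ j ∈ univ.filter (fun j => Function.update T i (2*τ) j ≤ u), w j) * K0 := by
    rw [share, hL2]
    simp only [Function.update_self]
    rw [hF2]
  have hterm : ∀ u ∈ D, (1/u - invSucc (insert τ M) u) *
          (w i / ∑ j ∈ univ.filter (fun j => Function.update T i τ j ≤ u), w j) * K0
      = (1/u - invSucc (insert (2*τ) M) u) *
          (w i / ∑ j ∈ univ.filter (fun j => Function.update T i (2*τ) j ≤ u), w j) * K0 := by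
    intro u hu
    have h2u : 2*τ ≤ u := (Finset.mem_filter.1 hu).2
    have hSet : (univ.filter (fun j => Function.update T i τ j ≤ u))
        = (univ.filter fun j => Function.update T i (2*τ) j ≤ u) := by
      ext j
      simp only [Finset.mem_filter, Finset.mem_univ, true_and]
      by_cases h : j = i
      · subst h
        rw [Function.update_self, Function.update_self]
        constructor <;> intro <;> linarith
      · rw [Function.update_of_ne h, Function.update_of_ne h]
    have hinv : invSucc (insert τ M) u = invSucc (insert (2*τ) M) u := by
      have a1 : (insert τ M).filter (fun v => u < v) = M.filter (fun v => u < v) := by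
        rw [Finset.filter_insert, if_neg (not_lt.2 (by linarith))]
      have a2 : (insert (2*τ) M).filter (fun v => u < v) = M.filter (fun v => u < v) := by
        rw [Finset.filter_insert, if_neg (not_lt.2 h2u)]
      rw [invSucc, invSucc, a1, a2]
    rw [hSet, hinv]
  have hfil1 : (insert τ M).filter (fun v => τ < v) = D := by
    rw [Finset.filter_insert, if_neg (lt_irrefl τ)]
    ext u
    simp only [Finset.mem_filter, hD]
    constructor
    · rintro ⟨hu, hlt⟩; exact ⟨hu, hMgap u hu hlt⟩
    · rintro ⟨hu, hle⟩; exact ⟨hu, by linarith⟩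
  have key : (1:ℝ)/τ = 1/(2*τ) + 1/(2*τ) := by
    field_simp
    norm_num
  by_cases h2M : 2*τ ∈ M
  · have h2D : 2*τ ∈ D := Finset.mem_filter.2 ⟨h2M, le_refl _⟩
    rw [e1, e2, Finset.sum_insert hτD, Finset.insert_eq_self.2 h2D,
      Finset.sum_congr rfl hterm]
    have hne : D.Nonempty := ⟨2*τ, h2D⟩
    have hmin : D.min' hne = 2*τ :=
      le_antisymm (Finset.min'_le _ _ h2D)
        (Finset.le_min' _ _ _ (fun u hu => (Finset.mem_filter.1 hu).2))
    have hiv : invSucc (insert τ M) τ = 1/(2*τ) := by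
      rw [invSucc, hfil1, dif_pos hne, hmin]
    rw [hiv, key]
    ring
  · have h2D : 2*τ ∉ D := fun h => h2M (Finset.mem_filter.1 h).1
    rw [e1, e2, Finset.sum_insert hτD, Finset.sum_insert h2D,
      Finset.sum_congr rfl hterm]
    have hfil2 : (insert (2*τ) M).filter (fun v => 2*τ < v) = D := by
      rw [Finset.filter_insert, if_neg (lt_irrefl _)]
      ext u
      simp only [Finset.mem_filter, hD]
      constructor
      · rintro ⟨hu, hlt⟩; exact ⟨hu, hlt.le⟩
      · rintro ⟨hu, hle⟩
        refine ⟨hu, lt_of_le_of_ne hle ?_⟩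
        rintro rfl
        exact h2M hu
    have hinveq : invSucc (insert τ M) τ = invSucc (insert (2*τ) M) (2*τ) := by
      rw [invSucc, invSucc, hfil1, hfil2]
    have hSeq : (univ.filter fun j => Function.update T i τ j ≤ τ)
        = (univ.filter fun j => Function.update T i (2*τ) j ≤ 2*τ) := by
      ext j
      simp only [Finset.mem_filter, Finset.mem_univ, true_and]
      by_cases h : j = i
      · subst h
        rw [Function.update_self, Function.update_self]
        constructor <;> intro <;> linarith
      · rw [Function.update_of_ne h, Function.update_of_ne h]
        constructor
        · intro hle; linarith
        · intro hle
          by_contra hc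
          push_neg at hc
          have h1 := hgap j h hc
          have h2 : T j = 2*τ := le_antisymm hle h1
          exact h2M (h2 ▸ Finset.mem_image.2 ⟨j, Finset.mem_erase.2 ⟨h, Finset.mem_univ j⟩, rfl⟩)
    rw [← hinveq, ← hSeq, key]
    ring


theorem statement0 {n : ℕ} (B K0 : ℝ) (K H w T : Fin n → ℝ)
    (hB : 0 < B) (hK0 : 0 < K0) (hK : ∀ i, 0 ≤ K i) (hH : ∀ i, 0 < H i)
    (hw : ∀ i, 0 < w i)
    (hT : ∀ j, InStrategy B K0 (K j) (H j) (T j)) (i : Fin n) :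
    List.TFAE
      [∃ z : ℤ, 0 < z ∧
          indCost K0 K H w (Function.update T i ((2 : ℝ) ^ z * T i)) i < indCost K0 K H w T i,
        indCost K0 K H w (Function.update T i (2 * T i)) i < indCost K0 K H w T i,
        T i < Real.sqrt ((K i + w i / (∑ j ∈ grp T i (T i), w j) * K0) / (2 * H i))] := by
  classical
  have hpot : IsPOT B (T i) := (hT i).1
  have hTi : 0 < T i := pot_pos hB hpot
  have hHi : 0 < H i := hH i
  set W : ℝ := ∑ j ∈ grp T i (T i), w j with hWdef
  have hWpos : 0 < W :=
    Finset.sum_pos (fun j _ => hw j) ⟨i, Finset.mem_insert_self i _⟩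
  have hpotk : ∀ k : ℕ, IsPOT B ((2:ℝ)^k * T i) := by
    intro k
    obtain ⟨z, hz⟩ := hpot
    exact ⟨(k : ℤ) + z, by rw [hz, zpow_add₀ (two_ne_zero), zpow_natCast]; ring⟩
  have hτpos : ∀ k : ℕ, 0 < (2:ℝ)^k * T i := fun k => by positivity
  have hgapk : ∀ k : ℕ, ∀ j, j ≠ i → (2:ℝ)^k * T i < T j → 2 * ((2:ℝ)^k * T i) ≤ T j :=
    fun k j hj hlt => pot_gap hB (hpotk k) (hT j).1 hlt
  set V : ℕ → ℝ := fun k => ∑ j ∈ univ.filter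
      (fun j => Function.update T i ((2:ℝ)^k * T i) j ≤ (2:ℝ)^k * T i), w j with hVdef
  have hVW : ∀ k, W ≤ V k := by
    intro k
    apply Finset.sum_le_sum_of_subset_of_nonneg
    · intro j hj
      simp only [grp, Finset.mem_insert, Finset.mem_filter, Finset.mem_univ, true_and] at hj ⊢
      have h2k : (1:ℝ) ≤ (2:ℝ)^k := one_le_pow₀ one_le_two
      rcases hj with rfl | hj
      · rw [Function.update_self]
      · by_cases h : j = i
        · subst h; rw [Function.update_self]
        · rw [Function.update_of_ne h]
          nlinarith
    · intro j _ _; exact (hw j).le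
  have hVpos : ∀ k, 0 < V k := fun k => lt_of_lt_of_le hWpos (hVW k)
  have hV0 : V 0 = W := by
    have e0 : (2:ℝ)^(0:ℕ) * T i = T i := by norm_num
    have hgrp : grp T i (T i) = univ.filter (fun j => T j ≤ T i) :=
      Finset.insert_eq_self.2 (Finset.mem_filter.2 ⟨Finset.mem_univ i, le_refl _⟩)
    rw [hVdef]
    simp only [e0, Function.update_eq_self]
    rw [hWdef, hgrp]
  have gstep : ∀ k : ℕ, indCost K0 K H w (Function.update T i ((2:ℝ)^(k+1) * T i)) i
      - indCost K0 K H w (Function.update T i ((2:ℝ)^k * T i)) i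
      = H i * ((2:ℝ)^k * T i) - (K i + (w i / V k) * K0) / (2 * ((2:ℝ)^k * T i)) := by
    intro k
    have hs := share_step K0 w T i ((2:ℝ)^k * T i) (hτpos k) (hgapk k)
    have h2 : (2:ℝ)^(k+1) * T i = 2 * ((2:ℝ)^k * T i) := by ring
    rw [indCost, indCost, h2, hs]
    simp only [Function.update_self]
    have hne : ((2:ℝ)^k * T i) ≠ 0 := (hτpos k).ne'
    have hVne : V k ≠ 0 := (hVpos k).ne'
    have hVk : (∑ j ∈ univ.filter
        (fun j => Function.update T i ((2:ℝ)^k * T i) j ≤ (2:ℝ)^k * T i), w j) = V k := rfl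
    rw [hVk]
    field_simp
    ring
  have hcond : (T i < Real.sqrt ((K i + w i / W * K0) / (2 * H i)))
      ↔ 2 * H i * (T i)^2 < K i + w i / W * K0 := by
    rw [Real.lt_sqrt hTi.le, lt_div_iff₀ (by positivity : (0:ℝ) < 2 * H i)]
    constructor <;> intro h <;> nlinarith
  have gstep0 : indCost K0 K H w (Function.update T i (2 * T i)) i
      - indCost K0 K H w T i
      = H i * T i - (K i + (w i / W) * K0) / (2 * T i) := by
    have := gstep 0
    have e0 : (2:ℝ)^(0:ℕ) * T i = T i := by norm_num
    have e1 : (2:ℝ)^(0+1:ℕ) * T i = 2 * T i := by norm_num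
    rw [e0, e1, hV0, Function.update_eq_self] at this
    exact this
  tfae_have 2 → 1 := by
    intro h2
    exact ⟨1, one_pos, by rwa [zpow_one]⟩
  tfae_have 3 → 2 := by
    intro h3
    have hlt := hcond.1 h3
    have : H i * T i - (K i + (w i / W) * K0) / (2 * T i) < 0 := by
      rw [sub_neg, lt_div_iff₀ (by positivity : (0:ℝ) < 2 * T i)]
      nlinarith
    linarith [gstep0]
  tfae_have 1 → 3 := by
    rintro ⟨z, hz, hlt⟩
    by_contra h3
    push_neg at h3
    have hA : K i + w i / W * K0 ≤ 2 * H i * (T i)^2 := by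
      have h4 := (Real.lt_sqrt hTi.le).not.mp (not_lt.2 h3)
      push_neg at h4
      rw [div_le_iff₀ (by positivity : (0:ℝ) < 2 * H i)] at h4
      nlinarith
    have claim : ∀ k : ℕ, indCost K0 K H w T i
        ≤ indCost K0 K H w (Function.update T i ((2:ℝ)^k * T i)) i := by
      intro k
      induction k with
      | zero =>
        simp only [pow_zero, one_mul, Function.update_eq_self]
        exact le_refl _
      | succ k ih =>
        have hst := gstep k
        have hstep_nonneg : 0 ≤ H i * ((2:ℝ)^k * T i)
            - (K i + (w i / V k) * K0) / (2 * ((2:ℝ)^k * T i)) := by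
          rw [sub_nonneg, div_le_iff₀ (by positivity : (0:ℝ) < 2 * ((2:ℝ)^k * T i))]
          have h1 : w i / V k ≤ w i / W := by
            apply div_le_div_of_nonneg_left (hw i).le hWpos (hVW k)
          have h1' : w i / V k * K0 ≤ w i / W * K0 :=
            mul_le_mul_of_nonneg_right h1 hK0.le
          have h2k : (1:ℝ) ≤ (2:ℝ)^k := one_le_pow₀ one_le_two
          nlinarith [sq_nonneg ((2:ℝ)^k - 1), mul_pos (hH i) (mul_pos hTi hTi)]
        linarith [ih]
    have hzz : (2:ℝ)^z = (2:ℝ)^(z.toNat) := by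
      rw [← zpow_natCast, Int.toNat_of_nonneg hz.le]
    rw [hzz] at hlt
    exact absurd (claim z.toNat) (not_le.2 hlt)
  tfae_finish
end

section
/- (Better-response monotonicity.) Under any weighted proportional sharing rule WPS^w with strictly positive weights, let T^1 and T^2 be two POT policies with T^1_i = T^2_i for some retailer i ∈ N. If N[T^2_i;T^2_{-i}] ⊆ N[T^1_i;T^1_{-i}], then f_i(2T^1_i;T^1_{-i}) < f_i(T^1_i;T^1_{-i}) implies f_i(2T^2_i;T^2_{-i}) < f_i(T^2_i;T^2_{-i}). In particular, if N[T^1_i;T^1_{-i}] = N[T^2_i;T^2_{-i}], then f_i(2T^1_i;T^1_{-i}) < f_i(T^1_i;T^1_{-i}) if and only if f_i(2T^2_i;T^2_{-i}) < f_i(T^2_i;T^2_{-i}). -/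
open Finset

noncomputable section

/-!
POT intervals are spaced by factors of two, so no level of `T` lies strictly between `T i`
and `2 * T i`. Doubling `T i` therefore leaves every term of `x_i` above `2 * T i` unchanged,
and comparing the remaining one or two terms gives
`x_i(T) = w_i K₀ / (2 T_i W) + x_i(2T_i; T_{-i})`, where `W` is the total weight of
`N[T_i; T_{-i}]`. Hence doubling pays off iff `2 H_i T_i² < K_i + w_i K₀ / W`, a condition
that only becomes easier to meet when `N[T_i; T_{-i}]` shrinks.
-/

open Function

noncomputable section

variable {n : ℕ}

def orderWeight (w T : Fin n → ℝ) (τ : ℝ) : ℝ :=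
  ∑ j ∈ univ.filter (fun j => T j ≤ τ), w j

def shareTerm (K0 : ℝ) (w T : Fin n → ℝ) (i : Fin n) (τ : ℝ) : ℝ :=
  (1 / τ - invSucc (levels T) τ) * (w i / orderWeight w T τ) * K0

theorem share_eq_sum_shareTerm (K0 : ℝ) (w T : Fin n → ℝ) (i : Fin n) :
    share K0 w T i = ∑ τ ∈ (levels T).filter (T i ≤ ·), shareTerm K0 w T i τ :=
  rfl

theorem orderWeight_self_eq_sum_grp (w T : Fin n → ℝ) (i : Fin n) :
    orderWeight w T (T i) = ∑ j ∈ grp T i (T i), w j := by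
  rw [grp, insert_eq_of_mem (by simp), orderWeight]

theorem Finset.filter_le_eq_insert_filter_lt {α : Type*} [LinearOrder α] {L : Finset α} {u : α}
    (hu : u ∈ L) : L.filter (u ≤ ·) = insert u (L.filter (u < ·)) := by
  ext v
  simp only [mem_filter, mem_insert]
  constructor
  · rintro ⟨hv, huv⟩
    exact huv.eq_or_lt.imp Eq.symm (⟨hv, ·⟩)
  · rintro (rfl | ⟨hv, huv⟩)
    exacts [⟨hu, le_rfl⟩, ⟨hv, huv.le⟩]

theorem Finset.filter_le_eq_filter_lt_of_notMem {α : Type*} [LinearOrder α] {L : Finset α}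
    {u : α} (hu : u ∉ L) : L.filter (u ≤ ·) = L.filter (u < ·) :=
  filter_congr fun _ hv => ⟨fun h => h.lt_of_ne (by rintro rfl; exact hu hv), le_of_lt⟩

theorem mem_levels (T : Fin n → ℝ) (j : Fin n) : T j ∈ levels T :=
  mem_image_of_mem T (mem_univ j)

section Update

variable (T : Fin n → ℝ) (i : Fin n) {s τ : ℝ}

theorem levels_update_filter_lt (hi : T i ≤ τ) (hs : s ≤ τ) :
    (levels (update T i s)).filter (τ < ·) = (levels T).filter (τ < ·) := by
  ext u
  simp only [levels, mem_filter, mem_image, mem_univ, true_and]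
  constructor
  · rintro ⟨⟨j, rfl⟩, hu⟩
    obtain rfl | hj := eq_or_ne j i
    · exact absurd hu (by simpa using hs)
    · exact ⟨⟨j, (update_of_ne hj s T).symm⟩, hu⟩
  · rintro ⟨⟨j, rfl⟩, hu⟩
    obtain rfl | hj := eq_or_ne j i
    · exact absurd hu hi.not_gt
    · exact ⟨⟨j, update_of_ne hj s T⟩, hu⟩

theorem invSucc_levels_update (hi : T i ≤ τ) (hs : s ≤ τ) :
    invSucc (levels (update T i s)) τ = invSucc (levels T) τ := by
  simp only [invSucc, levels_update_filter_lt T i hi hs]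

theorem orderWeight_update (w : Fin n → ℝ) (hi : T i ≤ τ) (hs : s ≤ τ) :
    orderWeight w (update T i s) τ = orderWeight w T τ := by
  unfold orderWeight
  congr 1
  ext j
  obtain rfl | hj := eq_or_ne j i
  · simp [hi, hs]
  · simp [update_of_ne hj]

theorem shareTerm_update (K0 : ℝ) (w : Fin n → ℝ) (hi : T i ≤ τ) (hs : s ≤ τ) :
    shareTerm K0 w (update T i s) i τ = shareTerm K0 w T i τ := by
  rw [shareTerm, shareTerm, invSucc_levels_update T i hi hs, orderWeight_update T i w hi hs]

theorem levels_update_filter_le (hs : T i ≤ s) :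
    (levels (update T i s)).filter (s ≤ ·) = insert s ((levels T).filter (s < ·)) := by
  rw [Finset.filter_le_eq_insert_filter_lt (by simpa using mem_levels (update T i s) i),
    levels_update_filter_lt T i hs le_rfl]

end Update

theorem IsPOT.pos {B t : ℝ} (hB : 0 < B) (ht : IsPOT B t) : 0 < t := by
  obtain ⟨z, rfl⟩ := ht
  positivity

theorem IsPOT.two_mul_le_of_lt {B t u : ℝ} (hB : 0 < B) (ht : IsPOT B t) (hu : IsPOT B u)
    (htu : t < u) : 2 * t ≤ u := by
  obtain ⟨a, rfl⟩ := ht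
  obtain ⟨b, rfl⟩ := hu
  have hab : a < b := by
    have := (mul_lt_mul_iff_of_pos_right hB).mp htu
    exact (zpow_lt_zpow_iff_right₀ one_lt_two).mp this
  calc 2 * ((2 : ℝ) ^ a * B) = 2 ^ (a + 1) * B := by rw [zpow_add_one₀ two_ne_zero]; ring
    _ ≤ 2 ^ b * B := by gcongr; exacts [one_le_two, hab]

section POT

variable {B : ℝ} (hB : 0 < B) {T : Fin n → ℝ} (hT : ∀ j, IsPOT B (T j)) (i : Fin n)
include hB hT

theorem levels_filter_lt_eq_filter_two_mul_le :
    (levels T).filter (T i < ·) = (levels T).filter (2 * T i ≤ ·) := by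
  have hpos := (hT i).pos hB
  ext u
  simp only [levels, mem_filter, mem_image, mem_univ, true_and]
  constructor
  · rintro ⟨⟨j, rfl⟩, hj⟩
    exact ⟨⟨j, rfl⟩, (hT i).two_mul_le_of_lt hB (hT j) hj⟩
  · rintro ⟨hu, hj⟩
    exact ⟨hu, by linarith⟩

theorem invSucc_levels_of_two_mul_mem (hmem : 2 * T i ∈ levels T) :
    invSucc (levels T) (T i) = 1 / (2 * T i) := by
  have hpos := (hT i).pos hB
  have hmem' : 2 * T i ∈ (levels T).filter (T i < ·) := mem_filter.mpr ⟨hmem, by linarith⟩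
  have hmin : ((levels T).filter (T i < ·)).min' ⟨_, hmem'⟩ = 2 * T i := by
    refine le_antisymm (min'_le _ _ hmem') (le_min' _ _ _ fun u hu => ?_)
    rw [levels_filter_lt_eq_filter_two_mul_le hB hT] at hu
    exact (mem_filter.mp hu).2
  rw [invSucc, dif_pos ⟨_, hmem'⟩, hmin]

theorem invSucc_levels_of_two_mul_notMem (hmem : 2 * T i ∉ levels T) :
    invSucc (levels T) (T i) = invSucc (levels T) (2 * T i) := by
  simp only [invSucc, levels_filter_lt_eq_filter_two_mul_le hB hT,
    Finset.filter_le_eq_filter_lt_of_notMem hmem]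

theorem orderWeight_two_mul_of_notMem (w : Fin n → ℝ) (hmem : 2 * T i ∉ levels T) :
    orderWeight w T (2 * T i) = orderWeight w T (T i) := by
  have hpos := (hT i).pos hB
  unfold orderWeight
  congr 1
  refine filter_congr fun j _ => ⟨fun hj => ?_, fun hj => by linarith⟩
  by_contra! hlt
  have hle := (hT i).two_mul_le_of_lt hB (hT j) hlt
  exact hmem (le_antisymm hj hle ▸ mem_levels T j)

-- `shareTerm` at `2 * T i` is a summand of `x_i(T)` only if `2 * T i` is a level of `T`.
theorem shareTerm_self_add_two_mul (K0 : ℝ) (w : Fin n → ℝ) :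
    shareTerm K0 w T i (T i) +
        (if 2 * T i ∈ levels T then shareTerm K0 w T i (2 * T i) else 0) =
      w i / orderWeight w T (T i) * K0 / (2 * T i) + shareTerm K0 w T i (2 * T i) := by
  have hpos := (hT i).pos hB
  split_ifs with hmem
  · rw [shareTerm, invSucc_levels_of_two_mul_mem hB hT i hmem]
    field_simp
    ring
  · rw [shareTerm, shareTerm, invSucc_levels_of_two_mul_notMem hB hT i hmem,
      orderWeight_two_mul_of_notMem hB hT i w hmem]
    field_simp
    ring

theorem share_eq_add_share_update_two_mul (K0 : ℝ) (w : Fin n → ℝ) :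
    share K0 w T i =
      w i / orderWeight w T (T i) * K0 / (2 * T i) +
        share K0 w (update T i (2 * T i)) i := by
  have hpos := (hT i).pos hB
  set R := (levels T).filter (2 * T i < ·)
  have hR : ∀ τ ∈ R, shareTerm K0 w (update T i (2 * T i)) i τ = shareTerm K0 w T i τ :=
    fun τ hτ =>
      have hτ : 2 * T i < τ := (mem_filter.mp hτ).2
      shareTerm_update T i K0 w (by linarith) hτ.le
  have hsplit : (levels T).filter (2 * T i ≤ ·) =
      if 2 * T i ∈ levels T then insert (2 * T i) R else R := by
    split_ifs with hmem
    exacts [Finset.filter_le_eq_insert_filter_lt hmem,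
      Finset.filter_le_eq_filter_lt_of_notMem hmem]
  have hnotR : 2 * T i ∉ R := by simp [R]
  have hshare : share K0 w T i = shareTerm K0 w T i (T i) +
      ((if 2 * T i ∈ levels T then shareTerm K0 w T i (2 * T i) else 0) +
        ∑ τ ∈ R, shareTerm K0 w T i τ) := by
    rw [share_eq_sum_shareTerm, Finset.filter_le_eq_insert_filter_lt (mem_levels T i),
      sum_insert (by simp), levels_filter_lt_eq_filter_two_mul_le hB hT, hsplit]
    split_ifs
    · rw [sum_insert hnotR]
    · rw [zero_add]
  have hshare' : share K0 w (update T i (2 * T i)) i =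
      shareTerm K0 w T i (2 * T i) + ∑ τ ∈ R, shareTerm K0 w T i τ := by
    rw [share_eq_sum_shareTerm, update_self, levels_update_filter_le T i (by linarith),
      sum_insert hnotR, shareTerm_update T i K0 w (by linarith) le_rfl, sum_congr rfl hR]
  rw [hshare, hshare', ← add_assoc, shareTerm_self_add_two_mul hB hT i, add_assoc]

theorem indCost_update_two_mul_lt_iff (K0 : ℝ) (K H w : Fin n → ℝ) :
    indCost K0 K H w (update T i (2 * T i)) i < indCost K0 K H w T i ↔
      2 * H i * T i ^ 2 < K i + w i / orderWeight w T (T i) * K0 := by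
  have hpos := (hT i).pos hB
  rw [indCost, indCost, share_eq_add_share_update_two_mul hB hT i, update_self]
  set c := w i / orderWeight w T (T i) * K0
  set x := share K0 w (update T i (2 * T i)) i
  have hgain : H i * T i + K i / T i + (c / (2 * T i) + x) -
      (H i * (2 * T i) + K i / (2 * T i) + x) = (K i + c - 2 * H i * T i ^ 2) / (2 * T i) := by
    field_simp
    ring
  rw [← sub_pos, hgain, div_pos_iff_of_pos_right (by positivity), sub_pos]

end POT

theorem indCost_update_two_mul_lt_of_grp_subset {B K0 : ℝ} {K H w : Fin n → ℝ} (hB : 0 < B)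
    (hK0 : 0 ≤ K0) (hw : ∀ i, 0 < w i) {T1 T2 : Fin n → ℝ} (hT1 : ∀ j, IsPOT B (T1 j))
    (hT2 : ∀ j, IsPOT B (T2 j)) {i : Fin n} (hi : T1 i = T2 i)
    (hsub : grp T2 i (T2 i) ⊆ grp T1 i (T1 i))
    (h1 : indCost K0 K H w (update T1 i (2 * T1 i)) i < indCost K0 K H w T1 i) :
    indCost K0 K H w (update T2 i (2 * T2 i)) i < indCost K0 K H w T2 i := by
  rw [indCost_update_two_mul_lt_iff hB hT1] at h1
  rw [indCost_update_two_mul_lt_iff hB hT2]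
  have hW : orderWeight w T2 (T2 i) ≤ orderWeight w T1 (T1 i) := by
    simp only [orderWeight_self_eq_sum_grp]
    exact sum_le_sum_of_subset_of_nonneg hsub fun j _ _ => (hw j).le
  have hW2 : 0 < orderWeight w T2 (T2 i) := by
    rw [orderWeight_self_eq_sum_grp]
    exact sum_pos (fun j _ => hw j) ⟨i, mem_insert_self _ _⟩
  calc 2 * H i * T2 i ^ 2 = 2 * H i * T1 i ^ 2 := by rw [hi]
    _ < K i + w i / orderWeight w T1 (T1 i) * K0 := h1
    _ ≤ K i + w i / orderWeight w T2 (T2 i) * K0 := by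
      gcongr K i + ?_ * K0
      exact div_le_div_of_nonneg_left (hw i).le hW2 hW

end

theorem statement1_general {n : ℕ} (B K0 : ℝ) (K H w : Fin n → ℝ)
    (hB : 0 < B) (hK0 : 0 < K0)
    (hw : ∀ i, 0 < w i)
    (T1 T2 : Fin n → ℝ) (hT1 : ∀ j, IsPOT B (T1 j)) (hT2 : ∀ j, IsPOT B (T2 j))
    (i : Fin n) (hi : T1 i = T2 i) :
    (grp T2 i (T2 i) ⊆ grp T1 i (T1 i) →
      indCost K0 K H w (Function.update T1 i (2 * T1 i)) i < indCost K0 K H w T1 i →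
      indCost K0 K H w (Function.update T2 i (2 * T2 i)) i < indCost K0 K H w T2 i) ∧
    (grp T1 i (T1 i) = grp T2 i (T2 i) →
      (indCost K0 K H w (Function.update T1 i (2 * T1 i)) i < indCost K0 K H w T1 i ↔
        indCost K0 K H w (Function.update T2 i (2 * T2 i)) i < indCost K0 K H w T2 i)) :=
  ⟨indCost_update_two_mul_lt_of_grp_subset hB hK0.le hw hT1 hT2 hi, fun he =>
    ⟨indCost_update_two_mul_lt_of_grp_subset hB hK0.le hw hT1 hT2 hi he.ge,
      indCost_update_two_mul_lt_of_grp_subset hB hK0.le hw hT2 hT1 hi.symm he.le⟩⟩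

theorem statement1 {n : ℕ} (B K0 : ℝ) (K H w : Fin n → ℝ)
    (hB : 0 < B) (hK0 : 0 < K0) (hK : ∀ i, 0 ≤ K i) (hH : ∀ i, 0 < H i)
    (hw : ∀ i, 0 < w i)
    (T1 T2 : Fin n → ℝ) (hT1 : ∀ j, IsPOT B (T1 j)) (hT2 : ∀ j, IsPOT B (T2 j))
    (i : Fin n) (hi : T1 i = T2 i) :
    (grp T2 i (T2 i) ⊆ grp T1 i (T1 i) →
      indCost K0 K H w (Function.update T1 i (2 * T1 i)) i < indCost K0 K H w T1 i →
      indCost K0 K H w (Function.update T2 i (2 * T2 i)) i < indCost K0 K H w T2 i) ∧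
    (grp T1 i (T1 i) = grp T2 i (T2 i) →
      (indCost K0 K H w (Function.update T1 i (2 * T1 i)) i < indCost K0 K H w T1 i ↔
        indCost K0 K H w (Function.update T2 i (2 * T2 i)) i < indCost K0 K H w T2 i)) :=
  statement1_general B K0 K H w hB hK0 hw T1 T2 hT1 hT2 i hi
end
end

section
/- For every JRP instance and every weighted proportional sharing rule WPS^w with strictly positive weights, the induced game admits a payoff dominant Nash equilibrium: there exists a Nash equilibrium T^w ∈ Γ such that f_i(T^w) ≤ f_i(T^*) for every Nash equilibrium T^* and every retailer i ∈ N. -/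
open Finset

/-!
Work with the exponents `z` of the POT values `2^z B`. Retailer `i`'s share of the major setup
cost is a Stieltjes sum `∑_{τ ≥ Tᵢ} (1/τ - 1/τ⁺) K₀ wᵢ / (wᵢ + W₋ᵢ(τ))`, where `W₋ᵢ(τ)` is the
weight of the other retailers ordering at least every `τ`; this sum does not change when the grid
of levels is refined, so profiles can be compared on a common grid. Since `W₋ᵢ` decreases when the
others lengthen their intervals, the game has increasing differences. Strategies below an explicit
cutoff are strictly dominated by the longest interval, so every equilibrium lives in a finite box
of exponents, on which the least best response is monotone (Topkis); its least fixed point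
(Tarski) is the least equilibrium. At the least equilibrium every retailer faces the shortest
intervals of the others, hence the smallest share, which makes it payoff dominant.
-/

noncomputable section

section LeastMinimizer

lemma Finset.exists_minimizer {α β : Type*} [LinearOrder β] {s : Finset α} (hs : s.Nonempty)
    (φ : α → β) :
    (s.filter fun z => ∀ z' ∈ s, φ z ≤ φ z').Nonempty := by
  obtain ⟨z, hz, hmin⟩ := s.exists_min_image φ hs
  exact ⟨z, mem_filter.mpr ⟨hz, hmin⟩⟩

variable {α β : Type*} [LinearOrder α] [LinearOrder β]

def leastMinimizer (s : Finset α) (hs : s.Nonempty) (φ : α → β) : α :=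
  (s.filter fun z => ∀ z' ∈ s, φ z ≤ φ z').min' (s.exists_minimizer hs φ)

variable {s : Finset α} (hs : s.Nonempty)

lemma leastMinimizer_mem_filter (φ : α → β) :
    leastMinimizer s hs φ ∈ s.filter fun z => ∀ z' ∈ s, φ z ≤ φ z' :=
  min'_mem _ _

lemma leastMinimizer_mem (φ : α → β) : leastMinimizer s hs φ ∈ s :=
  (mem_filter.mp (leastMinimizer_mem_filter hs φ)).1

lemma map_leastMinimizer_le (φ : α → β) {z : α} (hz : z ∈ s) :
    φ (leastMinimizer s hs φ) ≤ φ z :=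
  (mem_filter.mp (leastMinimizer_mem_filter hs φ)).2 z hz

lemma leastMinimizer_le {φ : α → β} {z : α} (hz : z ∈ s) (hmin : ∀ z' ∈ s, φ z ≤ φ z') :
    leastMinimizer s hs φ ≤ z :=
  min'_le _ _ (mem_filter.mpr ⟨hz, hmin⟩)

variable [AddCommGroup β] [IsOrderedAddMonoid β] in
lemma leastMinimizer_mono {φ ψ : α → β} (hd : ∀ z' z, z' ≤ z → ψ z - ψ z' ≤ φ z - φ z') :
    leastMinimizer s hs φ ≤ leastMinimizer s hs ψ := by
  by_contra! hlt
  have hψ := map_leastMinimizer_le hs ψ (leastMinimizer_mem hs φ)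
  have hφ : φ (leastMinimizer s hs ψ) ≤ φ (leastMinimizer s hs φ) :=
    sub_nonneg.mp ((sub_nonneg.mpr hψ).trans (hd _ _ hlt.le))
  exact (leastMinimizer_le hs (leastMinimizer_mem hs ψ) fun z hz =>
    hφ.trans (map_leastMinimizer_le hs φ hz)).not_gt hlt

end LeastMinimizer

section SupermodularGame

variable {ι : Type*} (a b : ι → ℤ) (c : ι → ℤ → (ι → ℤ) → ℝ)

def IsBoxEquilibrium (Z : ι → ℤ) : Prop :=
  ∀ i, Z i ∈ Finset.Icc (a i) (b i) ∧ ∀ z ∈ Finset.Icc (a i) (b i), c i (Z i) Z ≤ c i z Z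

def boxBestResponse (hab : a ≤ b) (Z : ι → ℤ) (i : ι) : ℤ :=
  leastMinimizer (Finset.Icc (a i) (b i)) (nonempty_Icc.mpr (hab i)) fun z => c i z Z

theorem exists_least_isBoxEquilibrium (hab : a ≤ b)
    (hc : ∀ i z' z, z' ≤ z → ∀ Z Z' : ι → ℤ, Z ≤ Z' → c i z Z' - c i z' Z' ≤ c i z Z - c i z' Z) :
    ∃ Zbar, IsBoxEquilibrium a b c Zbar ∧
      ∀ Z, IsBoxEquilibrium a b c Z → Zbar ≤ Z := by
  have : Fact (a ≤ b) := ⟨hab⟩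
  have hmem : ∀ Z i, boxBestResponse a b c hab Z i ∈ Finset.Icc (a i) (b i) := fun Z i =>
    leastMinimizer_mem _ _
  let f : Set.Icc a b →o Set.Icc a b :=
    { toFun := fun Z => ⟨boxBestResponse a b c hab Z,
        fun i => (Finset.mem_Icc.mp (hmem Z i)).1, fun i => (Finset.mem_Icc.mp (hmem Z i)).2⟩
      monotone' := fun Z Z' hZ i =>
        leastMinimizer_mono (nonempty_Icc.mpr (hab i)) fun z' z hz => hc i z' z hz Z Z' hZ }
  have hfix : boxBestResponse a b c hab f.lfp = f.lfp := congrArg Subtype.val f.map_lfp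
  refine ⟨f.lfp, fun i => ⟨?_, fun z hz => ?_⟩, fun Z hZ => ?_⟩
  · rw [← hfix]; exact hmem _ i
  · rw [← congrFun hfix i]
    exact map_leastMinimizer_le _ (fun z => c i z f.lfp) hz
  · have hZbox : Z ∈ Set.Icc a b :=
      ⟨fun i => (Finset.mem_Icc.mp (hZ i).1).1, fun i => (Finset.mem_Icc.mp (hZ i).1).2⟩
    have hle : f ⟨Z, hZbox⟩ ≤ ⟨Z, hZbox⟩ := fun i =>
      leastMinimizer_le (nonempty_Icc.mpr (hab i)) (hZ i).1 (hZ i).2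
    exact f.lfp_le hle

end SupermodularGame

lemma Finset.sum_filter_le_sub_sum_filter_le {α β : Type*} [LinearOrder α] [AddCommGroup β]
    (s : Finset α) {a b : α} (hab : a ≤ b) (f : α → β) :
    ∑ x ∈ s with a ≤ x, f x - ∑ x ∈ s with b ≤ x, f x = ∑ x ∈ s with a ≤ x ∧ x < b, f x := by
  rw [sub_eq_iff_eq_add, ← sum_filter_add_sum_filter_not (s.filter (a ≤ ·)) (· < b), filter_filter,
    filter_filter]
  congr 2
  exact filter_congr fun x _ => ⟨fun h => not_lt.mp h.2, fun h => ⟨hab.trans h, not_lt.mpr h⟩⟩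

section GridSum

lemma invSucc_insert_of_lt {s : Finset ℝ} {a τ : ℝ} (h : a < τ) :
    invSucc (insert a s) τ = invSucc s τ := by
  simp only [invSucc, filter_insert, if_neg h.not_gt]

lemma invSucc_le_one_div (L : Finset ℝ) {τ : ℝ} (hτ : 0 < τ) : invSucc L τ ≤ 1 / τ := by
  unfold invSucc
  split_ifs with h
  · exact one_div_le_one_div_of_le hτ (mem_filter.mp (min'_mem _ h)).2.le
  · positivity

theorem sum_one_div_sub_invSucc {L : Finset ℝ} {t : ℝ} (ht : t ∈ L) :
    ∑ τ ∈ L with t ≤ τ, (1 / τ - invSucc L τ) = 1 / t := by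
  induction L using Finset.induction_on_min generalizing t with
  | empty => simp at ht
  | insert a s ha ih =>
    have hsum : ∀ t, a < t →
        ∑ τ ∈ s with t ≤ τ, (1 / τ - invSucc (insert a s) τ) =
          ∑ τ ∈ s with t ≤ τ, (1 / τ - invSucc s τ) :=
      fun t hat => sum_congr rfl fun τ hτ => by
        rw [invSucc_insert_of_lt (hat.trans_le (mem_filter.mp hτ).2)]
    rcases mem_insert.mp ht with rfl | ht
    · have hfilter : (insert t s).filter (t ≤ ·) = insert t s :=
        filter_true_of_mem fun τ hτ => (mem_insert.mp hτ).elim ge_of_eq fun h => (ha τ h).le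
      have hnot : t ∉ s := fun h => (ha t h).false
      rw [hfilter, sum_insert hnot]
      rcases s.eq_empty_or_nonempty with rfl | hs
      · simp [invSucc]
      · have hsucc : ((insert t s).filter (t < ·)) = s := by
          rw [filter_insert, if_neg (lt_irrefl t), filter_true_of_mem ha]
        have hmin : s.filter (s.min' hs ≤ ·) = s := filter_true_of_mem fun τ hτ => min'_le s τ hτ
        have hrest : ∑ τ ∈ s, (1 / τ - invSucc (insert t s) τ) = 1 / s.min' hs := by
          have := hsum _ (ha _ (min'_mem s hs))
          rwa [ih (min'_mem s hs), hmin] at this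
        rw [hrest]
        simp [invSucc, hsucc, hs]
    · rw [filter_insert, if_neg (ha t ht).not_ge, hsum t (ha t ht), ih ht]

lemma sum_Ico_one_div_sub_invSucc {M : Finset ℝ} {a b : ℝ} (ha : a ∈ M) (hb : b ∈ M)
    (hab : a ≤ b) : ∑ τ ∈ M with a ≤ τ ∧ τ < b, (1 / τ - invSucc M τ) = 1 / a - 1 / b := by
  rw [← M.sum_filter_le_sub_sum_filter_le hab, sum_one_div_sub_invSucc ha,
    sum_one_div_sub_invSucc hb]

/-- The filter condition `∀ u ∈ L, ℓ < u → τ < u` says `τ < ℓ⁺`, the successor of `ℓ` in `L`. -/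
lemma sum_block_one_div_sub_invSucc {L M : Finset ℝ} (hLM : L ⊆ M) {ℓ : ℝ} (hℓ : ℓ ∈ L) :
    ∑ τ ∈ M with ℓ ≤ τ ∧ ∀ u ∈ L, ℓ < u → τ < u, (1 / τ - invSucc M τ) =
      1 / ℓ - invSucc L ℓ := by
  by_cases h : (L.filter (ℓ < ·)).Nonempty
  · set s := (L.filter (ℓ < ·)).min' h
    have hs := mem_filter.mp (min'_mem _ h)
    have hblock : M.filter (fun τ => ℓ ≤ τ ∧ ∀ u ∈ L, ℓ < u → τ < u) =
        M.filter fun τ => ℓ ≤ τ ∧ τ < s :=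
      filter_congr fun τ _ => and_congr_right fun _ =>
        ⟨fun hτ => hτ s hs.1 hs.2, fun hτ u hu hℓu => hτ.trans_le (min'_le _ _ (by simpa [hu]))⟩
    rw [hblock, sum_Ico_one_div_sub_invSucc (hLM hℓ) (hLM hs.1) hs.2.le, invSucc, dif_pos h]
  · have hblock : M.filter (fun τ => ℓ ≤ τ ∧ ∀ u ∈ L, ℓ < u → τ < u) = M.filter (ℓ ≤ ·) :=
      filter_congr fun τ _ => and_iff_left_of_imp fun _ u hu hℓu => (h ⟨u, by simpa [hu]⟩).elim
    rw [hblock, sum_one_div_sub_invSucc (hLM hℓ), invSucc, dif_neg h, sub_zero]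

/-- A Stieltjes sum of `g` against `-1/τ` over the points of the grid `M` from `t` on. -/
def gridSum (M : Finset ℝ) (t : ℝ) (g : ℝ → ℝ) : ℝ :=
  ∑ τ ∈ M with t ≤ τ, (1 / τ - invSucc M τ) * g τ

/-- `hg` says that `g` is constant on `[ℓ, ℓ⁺)` for consecutive points `ℓ < ℓ⁺` of `L`. -/
theorem gridSum_eq_of_subset {L M : Finset ℝ} (hLM : L ⊆ M) {t : ℝ} (ht : t ∈ L) {g : ℝ → ℝ}
    (hg : ∀ a b, a ≤ b → (∀ u ∈ L, a < u → b < u) → g a = g b) :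
    gridSum M t g = gridSum L t g := by
  let block (ℓ : ℝ) := M.filter fun τ => ℓ ≤ τ ∧ ∀ u ∈ L, ℓ < u → τ < u
  have hcover : M.filter (t ≤ ·) = (L.filter (t ≤ ·)).biUnion block := by
    ext τ
    simp only [mem_filter, mem_biUnion, block]
    constructor
    · rintro ⟨hτM, htτ⟩
      have hne : (L.filter (· ≤ τ)).Nonempty := ⟨t, mem_filter.mpr ⟨ht, htτ⟩⟩
      have hℓ := mem_filter.mp (max'_mem _ hne)
      refine ⟨_, ⟨hℓ.1, le_max' _ t (mem_filter.mpr ⟨ht, htτ⟩)⟩, hτM, hℓ.2, fun u hu hℓu => ?_⟩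
      by_contra! huτ
      exact (le_max' _ u (mem_filter.mpr ⟨hu, huτ⟩)).not_gt hℓu
    · rintro ⟨ℓ, ⟨-, htℓ⟩, hτM, hℓτ, -⟩
      exact ⟨hτM, htℓ.trans hℓτ⟩
  have hdisj : (L.filter (t ≤ ·) : Set ℝ).PairwiseDisjoint block := by
    intro ℓ hℓ ℓ' hℓ' hne
    refine disjoint_left.mpr fun τ hτ hτ' => ?_
    simp only [mem_filter, block, coe_filter] at hτ hτ' hℓ hℓ'
    rcases hne.lt_or_gt with hlt | hlt
    · exact (hτ.2.2 ℓ' hℓ'.1 hlt).not_ge hτ'.2.1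
    · exact (hτ'.2.2 ℓ hℓ.1 hlt).not_ge hτ.2.1
  rw [gridSum, gridSum, hcover, sum_biUnion hdisj]
  refine sum_congr rfl fun ℓ hℓ => ?_
  have hconst : ∀ τ ∈ block ℓ, g τ = g ℓ := fun τ hτ =>
    (hg ℓ τ (mem_filter.mp hτ).2.1 (mem_filter.mp hτ).2.2).symm
  rw [sum_congr rfl fun τ hτ => by rw [hconst τ hτ], ← sum_mul,
    sum_block_one_div_sub_invSucc hLM (mem_filter.mp hℓ).1]

lemma gridSum_mono {M : Finset ℝ} {t : ℝ} (ht : 0 < t) {g g' : ℝ → ℝ}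
    (h : ∀ τ ∈ M, t ≤ τ → g τ ≤ g' τ) : gridSum M t g ≤ gridSum M t g' :=
  sum_le_sum fun τ hτ => mul_le_mul_of_nonneg_left (h τ (mem_filter.mp hτ).1 (mem_filter.mp hτ).2)
    (sub_nonneg.mpr (invSucc_le_one_div M (ht.trans_le (mem_filter.mp hτ).2)))

lemma gridSum_const {M : Finset ℝ} {t : ℝ} (ht : t ∈ M) (c : ℝ) :
    gridSum M t (fun _ => c) = c / t := by
  rw [gridSum, ← sum_mul, sum_one_div_sub_invSucc ht]
  ring

lemma gridSum_sub_gridSum_le {M : Finset ℝ} {t' t : ℝ} (ht' : 0 < t') (htt : t' ≤ t)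
    {g g' : ℝ → ℝ} (h : ∀ τ ∈ M, t' ≤ τ → g τ ≤ g' τ) :
    gridSum M t' g - gridSum M t g ≤ gridSum M t' g' - gridSum M t g' := by
  simp only [gridSum, M.sum_filter_le_sub_sum_filter_le htt]
  refine sum_le_sum fun τ hτ => ?_
  obtain ⟨hτM, ht'τ, -⟩ := mem_filter.mp hτ
  exact mul_le_mul_of_nonneg_left (h τ hτM ht'τ)
    (sub_nonneg.mpr (invSucc_le_one_div M (ht'.trans_le ht'τ)))

end GridSum

section Share

variable {n : ℕ} (K0 : ℝ) (w : Fin n → ℝ)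

def othersWeight (T : Fin n → ℝ) (i : Fin n) (τ : ℝ) : ℝ :=
  ∑ j ∈ univ.erase i with T j ≤ τ, w j

lemma sum_filter_update_le (T : Fin n → ℝ) (i : Fin n) {t τ : ℝ} (htτ : t ≤ τ) :
    ∑ j with Function.update T i t j ≤ τ, w j = w i + othersWeight w T i τ := by
  rw [othersWeight, sum_filter, sum_filter, ← add_sum_erase _ _ (mem_univ i)]
  simp only [Function.update_self, if_pos htτ]
  congr 1
  exact sum_congr rfl fun j hj => by rw [Function.update_of_ne (ne_of_mem_erase hj)]

variable {w}

lemma othersWeight_nonneg (hw : ∀ j, 0 ≤ w j) (T : Fin n → ℝ) (i : Fin n) (τ : ℝ) :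
    0 ≤ othersWeight w T i τ :=
  sum_nonneg fun j _ => hw j

lemma othersWeight_antitone (hw : ∀ j, 0 ≤ w j) {T T' : Fin n → ℝ} (hTT : T ≤ T')
    (i : Fin n) (τ : ℝ) : othersWeight w T' i τ ≤ othersWeight w T i τ :=
  sum_le_sum_of_subset_of_nonneg (monotone_filter_right _ fun j _ h => (hTT j).trans h)
    fun j _ _ => hw j

lemma add_othersWeight_le_sum (hw : ∀ j, 0 ≤ w j) (T : Fin n → ℝ) (i : Fin n) (τ : ℝ) :
    w i + othersWeight w T i τ ≤ ∑ j, w j := by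
  rw [← add_sum_erase _ _ (mem_univ i)]
  exact add_le_add_right (sum_le_sum_of_subset_of_nonneg (filter_subset (T · ≤ τ) _)
    fun j _ _ => hw j) _

variable (w)

theorem share_update_eq (T : Fin n → ℝ) (i : Fin n) (t : ℝ) {M : Finset ℝ}
    (hM : levels (Function.update T i t) ⊆ M) :
    share K0 w (Function.update T i t) i =
      gridSum M t fun τ => K0 * w i / (w i + othersWeight w T i τ) := by
  have ht : t ∈ levels (Function.update T i t) :=
    mem_image.mpr ⟨i, mem_univ i, Function.update_self ..⟩
  rw [gridSum_eq_of_subset hM ht]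
  · simp only [share, gridSum, Function.update_self]
    refine sum_congr rfl fun τ hτ => ?_
    rw [sum_filter_update_le w T i (mem_filter.mp hτ).2]
    ring
  · intro a b hab hgap
    suffices othersWeight w T i a = othersWeight w T i b by rw [this]
    refine sum_congr (filter_congr fun j hj => ⟨fun h => h.trans hab, fun h => ?_⟩) fun _ _ => rfl
    by_contra! hlt
    have hj : T j ∈ levels (Function.update T i t) :=
      mem_image.mpr ⟨j, mem_univ j, Function.update_of_ne (ne_of_mem_erase hj) ..⟩
    exact (hgap _ hj hlt).not_ge h

variable {K0 w}

lemma shareKernel_antitone (hK0 : 0 ≤ K0) (hw : ∀ j, 0 < w j) {T T' : Fin n → ℝ} (hTT : T ≤ T')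
    (i : Fin n) (τ : ℝ) :
    K0 * w i / (w i + othersWeight w T i τ) ≤ K0 * w i / (w i + othersWeight w T' i τ) :=
  div_le_div_of_nonneg_left (mul_nonneg hK0 (hw i).le)
    (add_pos_of_pos_of_nonneg (hw i) (othersWeight_nonneg (fun j => (hw j).le) T' i τ))
    (add_le_add_right (othersWeight_antitone (fun j => (hw j).le) hTT i τ) _)

theorem share_update_le_share_update (hK0 : 0 ≤ K0) (hw : ∀ j, 0 < w j) {T T' : Fin n → ℝ}
    (hTT : T ≤ T') (i : Fin n) {t : ℝ} (ht : 0 < t) :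
    share K0 w (Function.update T i t) i ≤ share K0 w (Function.update T' i t) i := by
  rw [share_update_eq K0 w T i t subset_union_left,
    share_update_eq K0 w T' i t subset_union_right]
  exact gridSum_mono ht fun τ _ _ => shareKernel_antitone hK0 hw hTT i τ

/-- Increasing differences: when the others order less often, shortening one's own interval
costs more. -/
theorem share_update_sub_share_update_le (hK0 : 0 ≤ K0) (hw : ∀ j, 0 < w j) {T T' : Fin n → ℝ}
    (hTT : T ≤ T') (i : Fin n) {t' t : ℝ} (ht' : 0 < t') (htt : t' ≤ t) :
    share K0 w (Function.update T' i t) i - share K0 w (Function.update T' i t') i ≤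
      share K0 w (Function.update T i t) i - share K0 w (Function.update T i t') i := by
  set M := (levels (Function.update T i t) ∪ levels (Function.update T i t')) ∪
    (levels (Function.update T' i t) ∪ levels (Function.update T' i t'))
  rw [share_update_eq K0 w T i t (M := M) (subset_union_left.trans subset_union_left),
    share_update_eq K0 w T i t' (M := M) (subset_union_right.trans subset_union_left),
    share_update_eq K0 w T' i t (M := M) (subset_union_left.trans subset_union_right),
    share_update_eq K0 w T' i t' (M := M) (subset_union_right.trans subset_union_right)]
  have := gridSum_sub_gridSum_le (M := M) ht' htt fun τ _ _ => shareKernel_antitone hK0 hw hTT i τ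
  linarith

lemma share_le_div (hK0 : 0 ≤ K0) (hw : ∀ j, 0 < w j) (T : Fin n → ℝ) {i : Fin n}
    (hTi : 0 < T i) : share K0 w T i ≤ K0 / T i := by
  rw [← Function.update_eq_self i T, share_update_eq K0 w T i (T i) subset_rfl,
    Function.update_eq_self, ← gridSum_const (mem_image_of_mem T (mem_univ i))]
  refine gridSum_mono hTi fun τ _ _ => div_le_of_le_mul₀ ?_ hK0 ?_
  · exact add_nonneg (hw i).le (othersWeight_nonneg (fun j => (hw j).le) T i τ)
  · nlinarith [othersWeight_nonneg (fun j => (hw j).le) T i τ]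

lemma div_le_share (hK0 : 0 ≤ K0) (hw : ∀ j, 0 < w j) (T : Fin n → ℝ) {i : Fin n}
    (hTi : 0 < T i) : K0 * w i / (∑ j, w j) / T i ≤ share K0 w T i := by
  rw [← Function.update_eq_self i T, share_update_eq K0 w T i (T i) subset_rfl,
    Function.update_eq_self, ← gridSum_const (mem_image_of_mem T (mem_univ i))]
  refine gridSum_mono hTi fun τ _ _ => div_le_div_of_nonneg_left (mul_nonneg hK0 (hw i).le)
    (add_pos_of_pos_of_nonneg (hw i) (othersWeight_nonneg (fun j => (hw j).le) T i τ))
    (add_othersWeight_le_sum (fun j => (hw j).le) T i τ)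

end Share

section PowerOfTwo

def pot (B : ℝ) (z : ℤ) : ℝ := 2 ^ z * B

variable {B : ℝ}

lemma pot_pos_s4 (hB : 0 < B) (z : ℤ) : 0 < pot B z := by
  unfold pot; positivity

lemma pot_strictMono (hB : 0 < B) : StrictMono (pot B) := fun _ _ h =>
  mul_lt_mul_of_pos_right (zpow_lt_zpow_right₀ one_lt_two h) hB

lemma pot_add_one (z : ℤ) : pot B (z + 1) = 2 * pot B z := by
  rw [pot, pot, zpow_add_one₀ two_ne_zero]
  ring

lemma isPOT_pot (z : ℤ) : IsPOT B (pot B z) := ⟨z, rfl⟩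

lemma pot_le_iff (hB : 0 < B) {x : ℝ} (hx : 0 < x) {z : ℤ} :
    pot B z ≤ x ↔ z ≤ ⌊Real.logb 2 (x / B)⌋ := by
  rw [pot, ← le_div_iff₀ hB, Int.le_floor,
    Real.le_logb_iff_rpow_le one_lt_two (div_pos hx hB), Real.rpow_intCast]

lemma le_pot_iff (hB : 0 < B) {x : ℝ} (hx : 0 < x) {z : ℤ} :
    x ≤ pot B z ↔ ⌈Real.logb 2 (x / B)⌉ ≤ z := by
  rw [pot, ← div_le_iff₀ hB, Int.ceil_le,
    Real.logb_le_iff_le_rpow one_lt_two (div_pos hx hB), Real.rpow_intCast]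

end PowerOfTwo

section StrategyBox

variable {n : ℕ} (B K0 : ℝ) (K H w : Fin n → ℝ)

/-- The largest exponent `z` with `2^z B ≤ √(2(K₀ + Kᵢ)/Hᵢ)`. -/
def maxExp (i : Fin n) : ℤ := ⌊Real.logb 2 (Real.sqrt (2 * (K0 + K i) / H i) / B)⌋

def costCap (i : Fin n) : ℝ :=
  H i * pot B (maxExp B K0 K H i) + K i / pot B (maxExp B K0 K H i) +
    K0 / pot B (maxExp B K0 K H i)

/-- Below the second term retailer `i`'s share alone exceeds `costCap`, which bounds its cost at
the longest interval; the first term is the lower end of `Γᵢ`. -/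
def cutoff (i : Fin n) : ℝ :=
  max (Real.sqrt (K i / (2 * H i))) (K0 * w i / (∑ j, w j) / costCap B K0 K H i)

def minExp (i : Fin n) : ℤ := ⌈Real.logb 2 (cutoff B K0 K H w i / B)⌉

variable {B K0 K H w} (hB : 0 < B) (hK0 : 0 < K0) (hK : ∀ i, 0 ≤ K i) (hH : ∀ i, 0 < H i)
include hB hK0 hK hH

lemma pot_maxExp_le (i : Fin n) :
    pot B (maxExp B K0 K H i) ≤ Real.sqrt (2 * (K0 + K i) / H i) := by
  have := hK i; have := hH i
  exact (pot_le_iff hB (Real.sqrt_pos.mpr (by positivity))).mpr le_rfl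

lemma lt_pot_maxExp_add_one (i : Fin n) :
    Real.sqrt (2 * (K0 + K i) / H i) < pot B (maxExp B K0 K H i + 1) := by
  have := hK i; have := hH i
  exact lt_of_not_ge fun h =>
    (Int.lt_succ _).not_ge ((pot_le_iff hB (Real.sqrt_pos.mpr (by positivity))).mp h)

lemma sqrt_le_pot_maxExp (i : Fin n) : Real.sqrt (K i / (2 * H i)) ≤ pot B (maxExp B K0 K H i) := by
  have hKi := hK i; have hHi := hH i
  have hdouble : 2 * Real.sqrt (K i / (2 * H i)) ≤ Real.sqrt (2 * (K0 + K i) / H i) := by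
    have := hK0
    rw [Real.le_sqrt (by positivity) (by positivity), mul_pow, Real.sq_sqrt (by positivity)]
    rw [show (2 : ℝ) ^ 2 * (K i / (2 * H i)) = 2 * K i / H i by field_simp]
    gcongr
    linarith
  have := lt_pot_maxExp_add_one hB hK0 hK hH i
  rw [pot_add_one] at this
  linarith

lemma costCap_pos (i : Fin n) : 0 < costCap B K0 K H i := by
  have := hK i; have := hH i; have := pot_pos_s4 hB (maxExp B K0 K H i)
  unfold costCap; positivity

lemma cutoff_pos (hw : ∀ i, 0 < w i) (i : Fin n) : 0 < cutoff B K0 K H w i := by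
  have := hw i; have := costCap_pos hB hK0 hK hH i
  have : 0 < ∑ j, w j := sum_pos (fun j _ => hw j) ⟨i, mem_univ i⟩
  exact lt_max_of_lt_right (by positivity)

lemma cutoff_le_pot_maxExp (hw : ∀ i, 0 < w i) (i : Fin n) :
    cutoff B K0 K H w i ≤ pot B (maxExp B K0 K H i) := by
  refine max_le (sqrt_le_pot_maxExp hB hK0 hK hH i) ?_
  have hpot := pot_pos_s4 hB (maxExp B K0 K H i)
  have hKi := hK i; have hHi := hH i
  have hcap : pot B (maxExp B K0 K H i) * costCap B K0 K H i =
      H i * pot B (maxExp B K0 K H i) ^ 2 + K i + K0 := by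
    unfold costCap; field_simp
  have hfrac : K0 * w i / ∑ j, w j ≤ K0 := by
    rw [mul_div_assoc]
    refine mul_le_of_le_one_right hK0.le (div_le_one_of_le₀ ?_ (sum_nonneg fun j _ => (hw j).le))
    exact single_le_sum (fun j _ => (hw j).le) (mem_univ i)
  rw [div_le_iff₀ (costCap_pos hB hK0 hK hH i), hcap]
  nlinarith

lemma minExp_le_maxExp (hw : ∀ i, 0 < w i) (i : Fin n) :
    minExp B K0 K H w i ≤ maxExp B K0 K H i :=
  (le_pot_iff hB (cutoff_pos hB hK0 hK hH hw i)).mp (cutoff_le_pot_maxExp hB hK0 hK hH hw i)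

lemma inStrategy_iff (i : Fin n) {t : ℝ} :
    InStrategy B K0 (K i) (H i) t ↔
      ∃ z, t = pot B z ∧ Real.sqrt (K i / (2 * H i)) ≤ pot B z ∧ z ≤ maxExp B K0 K H i := by
  have := hK i; have := hH i
  have hU : 0 < Real.sqrt (2 * (K0 + K i) / H i) := Real.sqrt_pos.mpr (by positivity)
  constructor
  · rintro ⟨⟨z, rfl⟩, hlow, hup⟩
    exact ⟨z, rfl, hlow, (pot_le_iff hB hU).mp hup⟩
  · rintro ⟨z, rfl, hlow, hz⟩
    exact ⟨isPOT_pot z, hlow,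
      ((pot_strictMono hB).monotone hz).trans (pot_maxExp_le hB hK0 hK hH i)⟩

lemma inStrategy_pot (hw : ∀ i, 0 < w i) (i : Fin n) {z : ℤ}
    (hz : z ∈ Finset.Icc (minExp B K0 K H w i) (maxExp B K0 K H i)) :
    InStrategy B K0 (K i) (H i) (pot B z) := by
  obtain ⟨hmin, hmax⟩ := Finset.mem_Icc.mp hz
  refine (inStrategy_iff hB hK0 hK hH i).mpr ⟨z, rfl, ?_, hmax⟩
  calc Real.sqrt (K i / (2 * H i)) ≤ cutoff B K0 K H w i := le_max_left _ _
    _ ≤ pot B (minExp B K0 K H w i) := (le_pot_iff hB (cutoff_pos hB hK0 hK hH hw i)).mpr le_rfl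
    _ ≤ pot B z := (pot_strictMono hB).monotone hmin

theorem indCost_update_pot_maxExp_lt (hw : ∀ i, 0 < w i) (T : Fin n → ℝ) (i : Fin n) {z : ℤ}
    (hz : z < minExp B K0 K H w i) (hlow : Real.sqrt (K i / (2 * H i)) ≤ pot B z) :
    indCost K0 K H w (Function.update T i (pot B (maxExp B K0 K H i))) i <
      indCost K0 K H w (Function.update T i (pot B z)) i := by
  have hp := pot_pos_s4 hB z
  have hKi := hK i; have hHi := hH i
  have hcap : indCost K0 K H w (Function.update T i (pot B (maxExp B K0 K H i))) i ≤
      costCap B K0 K H i := by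
    have := share_le_div hK0.le hw (Function.update T i (pot B (maxExp B K0 K H i)))
      (i := i) (by simpa using pot_pos_s4 hB _)
    simp only [indCost, costCap, Function.update_self] at this ⊢
    linarith
  have hshare : K0 * w i / (∑ j, w j) / pot B z ≤
      indCost K0 K H w (Function.update T i (pot B z)) i := by
    have := div_le_share hK0.le hw (Function.update T i (pot B z)) (i := i) (by simpa using hp)
    simp only [indCost, Function.update_self] at this ⊢
    have : 0 ≤ H i * pot B z + K i / pot B z := by positivity
    linarith
  have hcut : pot B z < K0 * w i / (∑ j, w j) / costCap B K0 K H i := by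
    have : pot B z < cutoff B K0 K H w i :=
      lt_of_not_ge fun h => hz.not_ge ((le_pot_iff hB (cutoff_pos hB hK0 hK hH hw i)).mp h)
    exact (lt_max_iff.mp this).resolve_left hlow.not_gt
  have hcap_lt : costCap B K0 K H i < K0 * w i / (∑ j, w j) / pot B z := by
    rwa [lt_div_iff₀ (costCap_pos hB hK0 hK hH i), ← lt_div_iff₀' hp] at hcut
  linarith

end StrategyBox

section ExponentGame

variable {n : ℕ} (B K0 : ℝ) (K H w : Fin n → ℝ)

def exponentCost (i : Fin n) (z : ℤ) (Z : Fin n → ℤ) : ℝ :=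
  indCost K0 K H w (pot B ∘ Function.update Z i z) i

lemma exponentCost_self (i : Fin n) (Z : Fin n → ℤ) :
    exponentCost B K0 K H w i (Z i) Z = indCost K0 K H w (pot B ∘ Z) i := by
  rw [exponentCost, Function.update_eq_self]

lemma exponentCost_eq (i : Fin n) (z : ℤ) (Z : Fin n → ℤ) :
    exponentCost B K0 K H w i z Z =
      indCost K0 K H w (Function.update (pot B ∘ Z) i (pot B z)) i := by
  rw [exponentCost, Function.comp_update]

variable {B K0 K H w} (hB : 0 < B) (hK0 : 0 < K0)

include hB hK0

lemma exponentCost_mono (hw : ∀ i, 0 < w i) (i : Fin n) (z : ℤ) {Z Z' : Fin n → ℤ}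
    (hZ : Z ≤ Z') : exponentCost B K0 K H w i z Z ≤ exponentCost B K0 K H w i z Z' := by
  simp only [exponentCost_eq, indCost, Function.update_self]
  gcongr
  exact share_update_le_share_update hK0.le hw ((pot_strictMono hB).monotone.comp_le_comp_left hZ) i
    (pot_pos_s4 hB z)

lemma exponentCost_increasingDifferences (hw : ∀ i, 0 < w i) (i : Fin n) {z' z : ℤ}
    (hzz : z' ≤ z) {Z Z' : Fin n → ℤ} (hZ : Z ≤ Z') :
    exponentCost B K0 K H w i z Z' - exponentCost B K0 K H w i z' Z' ≤
      exponentCost B K0 K H w i z Z - exponentCost B K0 K H w i z' Z := by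
  simp only [exponentCost_eq, indCost, Function.update_self]
  have := share_update_sub_share_update_le hK0.le hw
    ((pot_strictMono hB).monotone.comp_le_comp_left hZ) i (pot_pos_s4 hB z')
    ((pot_strictMono hB).monotone hzz)
  linarith

variable (hK : ∀ i, 0 ≤ K i) (hH : ∀ i, 0 < H i) (hw : ∀ i, 0 < w i)
include hK hH hw

lemma exponentCost_maxExp_lt (i : Fin n) {z : ℤ} (Z : Fin n → ℤ) (hz : z < minExp B K0 K H w i)
    (hlow : Real.sqrt (K i / (2 * H i)) ≤ pot B z) :
    exponentCost B K0 K H w i (maxExp B K0 K H i) Z < exponentCost B K0 K H w i z Z := by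
  simpa only [exponentCost_eq] using
    indCost_update_pot_maxExp_lt hB hK0 hK hH hw (pot B ∘ Z) i hz hlow

lemma maxExp_mem_Icc (i : Fin n) :
    maxExp B K0 K H i ∈ Finset.Icc (minExp B K0 K H w i) (maxExp B K0 K H i) :=
  Finset.mem_Icc.mpr ⟨minExp_le_maxExp hB hK0 hK hH hw i, le_rfl⟩

theorem isNE_of_isBoxEquilibrium {Z : Fin n → ℤ}
    (hZ : IsBoxEquilibrium (minExp B K0 K H w) (maxExp B K0 K H) (exponentCost B K0 K H w) Z) :
    IsNE B K0 K H w (pot B ∘ Z) := by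
  refine ⟨fun i => inStrategy_pot hB hK0 hK hH hw i (hZ i).1, fun i t ht => ?_⟩
  obtain ⟨z, rfl, hlow, hz⟩ := (inStrategy_iff hB hK0 hK hH i).mp ht
  rw [← exponentCost_self, ← exponentCost_eq]
  by_cases hmin : minExp B K0 K H w i ≤ z
  · exact (hZ i).2 z (Finset.mem_Icc.mpr ⟨hmin, hz⟩)
  · exact ((hZ i).2 _ (maxExp_mem_Icc hB hK0 hK hH hw i)).trans
      (exponentCost_maxExp_lt hB hK0 hK hH hw i Z (not_le.mp hmin) hlow).le

theorem exists_isBoxEquilibrium_of_isNE {T : Fin n → ℝ} (hT : IsNE B K0 K H w T) :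
    ∃ Z, T = pot B ∘ Z ∧
      IsBoxEquilibrium (minExp B K0 K H w) (maxExp B K0 K H) (exponentCost B K0 K H w) Z := by
  choose Z hTZ hlow hZmax using fun j => (inStrategy_iff hB hK0 hK hH j).mp (hT.1 j)
  obtain rfl : T = pot B ∘ Z := funext hTZ
  have hdev : ∀ i z, InStrategy B K0 (K i) (H i) (pot B z) →
      exponentCost B K0 K H w i (Z i) Z ≤ exponentCost B K0 K H w i z Z := fun i z hz => by
    rw [exponentCost_self, exponentCost_eq]
    exact hT.2 i _ hz
  refine ⟨Z, rfl, fun i => ⟨Finset.mem_Icc.mpr ⟨?_, hZmax i⟩, fun z hz =>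
    hdev i z (inStrategy_pot hB hK0 hK hH hw i hz)⟩⟩
  by_contra! hlt
  exact (hdev i _ (inStrategy_pot hB hK0 hK hH hw i (maxExp_mem_Icc hB hK0 hK hH hw i))).not_gt
    (exponentCost_maxExp_lt hB hK0 hK hH hw i Z hlt (hlow i))

end ExponentGame

end

theorem statement4_general {n : ℕ} (B K0 : ℝ) (K H w : Fin n → ℝ)
    (hB : 0 < B) (hK0 : 0 < K0) (hK : ∀ i, 0 ≤ K i) (hH : ∀ i, 0 < H i)
    (hw : ∀ i, 0 < w i) :
    ∃ Tw : Fin n → ℝ, IsNE B K0 K H w Tw ∧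
      ∀ Tstar : Fin n → ℝ, IsNE B K0 K H w Tstar →
        ∀ i, indCost K0 K H w Tw i ≤ indCost K0 K H w Tstar i := by
  obtain ⟨Zbar, hbar, hleast⟩ := exists_least_isBoxEquilibrium (minExp B K0 K H w)
    (maxExp B K0 K H) (exponentCost B K0 K H w) (minExp_le_maxExp hB hK0 hK hH hw)
    fun i _ _ hzz _ _ hZ => exponentCost_increasingDifferences hB hK0 hw i hzz hZ
  refine ⟨pot B ∘ Zbar, isNE_of_isBoxEquilibrium hB hK0 hK hH hw hbar, fun Tstar hT i => ?_⟩
  obtain ⟨Z, rfl, hZ⟩ := exists_isBoxEquilibrium_of_isNE hB hK0 hK hH hw hT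
  calc indCost K0 K H w (pot B ∘ Zbar) i
      = exponentCost B K0 K H w i (Zbar i) Zbar := (exponentCost_self ..).symm
    _ ≤ exponentCost B K0 K H w i (Z i) Zbar := (hbar i).2 _ (hZ i).1
    _ ≤ exponentCost B K0 K H w i (Z i) Z := exponentCost_mono hB hK0 hw i _ (hleast Z hZ)
    _ = indCost K0 K H w (pot B ∘ Z) i := exponentCost_self ..

theorem statement4 {n : ℕ} (hn : 0 < n) (B K0 : ℝ) (K H w : Fin n → ℝ)
    (hB : 0 < B) (hK0 : 0 < K0) (hK : ∀ i, 0 ≤ K i) (hH : ∀ i, 0 < H i)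
    (hw : ∀ i, 0 < w i) :
    ∃ Tw : Fin n → ℝ, IsNE B K0 K H w Tw ∧
      ∀ Tstar : Fin n → ℝ, IsNE B K0 K H w Tstar →
        ∀ i, indCost K0 K H w Tw i ≤ indCost K0 K H w Tstar i :=
  statement4_general B K0 K H w hB hK0 hK hH hw
end

section
/- Under any weighted proportional sharing rule WPS^w with strictly positive weights, if T^w is a Nash equilibrium that is pointwise least among all Nash equilibria (T^w_i ≤ T^*_i for every Nash equilibrium T^* and every i ∈ N), then T^w is payoff dominant: f_i(T^w) ≤ f_i(T^*) for every Nash equilibrium T^* and every i ∈ N. -/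
open Finset

-- AUX
lemma invSucc_congr {L L' : Finset ℝ} {τ τ' : ℝ}
    (h : L.filter (fun u => τ < u) = L'.filter (fun u => τ' < u)) :
    invSucc L τ = invSucc L' τ' := by
  unfold invSucc
  rw [h]

lemma invSucc_erase_of_lt (S : Finset ℝ) (σ τ τ0 : ℝ) (hτ0 : τ0 ∈ S)
    (h1 : τ < τ0) (h2 : τ0 < σ) : invSucc (S.erase σ) τ = invSucc S τ := by
  have hτ0' : τ0 ∈ (S.erase σ).filter (fun u => τ < u) :=
    mem_filter.2 ⟨mem_erase.2 ⟨ne_of_lt h2, hτ0⟩, h1⟩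
  have hτ0'' : τ0 ∈ S.filter (fun u => τ < u) := mem_filter.2 ⟨hτ0, h1⟩
  have hne1 : ((S.erase σ).filter (fun u => τ < u)).Nonempty := ⟨τ0, hτ0'⟩
  have hne2 : (S.filter (fun u => τ < u)).Nonempty := ⟨τ0, hτ0''⟩
  rw [invSucc, invSucc, dif_pos hne1, dif_pos hne2]
  congr 1
  have hsub : (S.erase σ).filter (fun u => τ < u) ⊆ S.filter (fun u => τ < u) :=
    filter_subset_filter _ (erase_subset _ _)
  apply le_antisymm
  · have hm := Finset.min'_mem (S.filter (fun u => τ < u)) hne2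
    have hlt : (S.filter (fun u => τ < u)).min' hne2 ≠ σ := by
      have := Finset.min'_le _ _ hτ0''
      exact ne_of_lt (lt_of_le_of_lt this h2)
    exact Finset.min'_le _ _ (mem_filter.2 ⟨mem_erase.2 ⟨hlt, (mem_filter.1 hm).1⟩, (mem_filter.1 hm).2⟩)
  · exact Finset.min'_le _ _ (hsub (Finset.min'_mem _ hne1))

lemma invSucc_le (S : Finset ℝ) (τ : ℝ) (hτ : 0 < τ) (hS : ∀ u ∈ S, 0 < u) :
    invSucc S τ ≤ 1 / τ := by
  unfold invSucc
  split_ifs with h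
  · have hm := Finset.min'_mem _ h
    have h1 := (mem_filter.1 hm).2
    exact one_div_le_one_div_of_le hτ h1.le
  · positivity

lemma Ti_mem_levels {n : ℕ} (T : Fin n → ℝ) (i : Fin n) : T i ∈ levels T :=
  Finset.mem_image.2 ⟨i, Finset.mem_univ i, rfl⟩

lemma sum_refine {n : ℕ} (K0 : ℝ) (w T : Fin n → ℝ) (i : Fin n) (hTi : 0 < T i)
    (S : Finset ℝ) :
    ((levels T).filter (fun τ => T i ≤ τ)) ⊆ S → (∀ σ ∈ S, T i ≤ σ) →
    share K0 w T i =
      ∑ τ ∈ S, (1 / τ - invSucc S τ) *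
        (w i / ∑ j ∈ Finset.univ.filter (fun j => T j ≤ τ), w j) * K0 := by
  induction S using Finset.strongInduction with
  | _ S ih =>
    intro hsub hge
    set A : Finset ℝ := (levels T).filter (fun τ => T i ≤ τ) with hA
    by_cases hSA : S ⊆ A
    · -- base case: S = A
      have hSeq : S = A := Finset.Subset.antisymm hSA hsub
      rw [hSeq]
      unfold share
      apply Finset.sum_congr rfl
      intro τ hτ
      have hTiτ : T i ≤ τ := (mem_filter.1 hτ).2
      have heq : invSucc (levels T) τ = invSucc A τ := by
        apply invSucc_congr
        rw [hA, Finset.filter_filter]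
        symm
        apply Finset.filter_congr
        intro u hu
        constructor
        · intro h; exact h.2
        · intro h; exact ⟨hTiτ.trans h.le, h⟩
      rw [heq]
    · -- step: remove some σ ∈ S \ A
      obtain ⟨σ, hσS, hσA⟩ := Finset.not_subset.1 hSA
      have hTiA : T i ∈ A := mem_filter.2 ⟨Ti_mem_levels T i, le_refl _⟩
      have hTiσ : T i < σ := lt_of_le_of_ne (hge σ hσS) (by rintro rfl; exact hσA hTiA)
      have hσnl : σ ∉ levels T := fun hl => hσA (mem_filter.2 ⟨hl, hge σ hσS⟩)
      set F : Finset ℝ := S.filter (fun u => u < σ) with hF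
      have hFne : F.Nonempty := ⟨T i, mem_filter.2 ⟨hsub hTiA, hTiσ⟩⟩
      set τ0 : ℝ := F.max' hFne with hτ0def
      have hτ0F : τ0 ∈ F := Finset.max'_mem F hFne
      have hτ0S : τ0 ∈ S := (mem_filter.1 hτ0F).1
      have hτ0σ : τ0 < σ := (mem_filter.1 hτ0F).2
      have hmax : ∀ u ∈ S, τ0 < u → σ ≤ u := by
        intro u hu hlt
        by_contra hc
        exact absurd (Finset.le_max' F u (mem_filter.2 ⟨hu, lt_of_not_ge hc⟩)) (not_le.2 hlt)
      set S' : Finset ℝ := S.erase σ with hS'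
      have hτ0S' : τ0 ∈ S' := mem_erase.2 ⟨ne_of_lt hτ0σ, hτ0S⟩
      -- claim 2: filter eq for τ0 in S'
      have hclaim2 : S'.filter (fun u => τ0 < u) = S.filter (fun u => σ < u) := by
        ext u
        simp only [hS', mem_filter, mem_erase]
        constructor
        · rintro ⟨⟨hne, hu⟩, h0⟩
          exact ⟨hu, lt_of_le_of_ne (hmax u hu h0) (Ne.symm hne)⟩
        · rintro ⟨hu, hσu⟩
          exact ⟨⟨ne_of_gt hσu, hu⟩, hτ0σ.trans hσu⟩
      -- weight groups at σ and τ0 agree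
      have hW : (Finset.univ.filter (fun j => T j ≤ σ) : Finset (Fin n)) =
          Finset.univ.filter (fun j => T j ≤ τ0) := by
        ext j
        simp only [mem_filter, Finset.mem_univ, true_and]
        constructor
        · intro h
          have hne : T j ≠ σ := fun e => hσnl (e ▸ Ti_mem_levels T j)
          have hlt : T j < σ := lt_of_le_of_ne h hne
          by_contra hc
          have h0 : τ0 < T j := lt_of_not_ge hc
          have hTjS : T j ∈ S := hsub (mem_filter.2 ⟨Ti_mem_levels T j,
            (hge τ0 hτ0S).trans h0.le⟩)
          exact absurd (hmax _ hTjS h0) (not_le.2 hlt)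
        · intro h; exact h.trans hτ0σ.le
      -- invSucc S τ0 = 1/σ
      have hinvτ0 : invSucc S τ0 = 1 / σ := by
        have hne : (S.filter (fun u => τ0 < u)).Nonempty := ⟨σ, mem_filter.2 ⟨hσS, hτ0σ⟩⟩
        rw [invSucc, dif_pos hne]
        congr 1
        apply le_antisymm
        · exact Finset.min'_le _ _ (mem_filter.2 ⟨hσS, hτ0σ⟩)
        · have hm := Finset.min'_mem _ hne
          exact hmax _ (mem_filter.1 hm).1 (mem_filter.1 hm).2
      -- claim 3: invSucc agrees on S' off τ0
      have hclaim3 : ∀ τ ∈ S', τ ≠ τ0 → invSucc S' τ = invSucc S τ := by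
        intro τ hτS' hττ0
        have hτS : τ ∈ S := (mem_erase.1 hτS').2
        have hτσ : τ ≠ σ := (mem_erase.1 hτS').1
        by_cases hcs : σ ≤ τ
        · apply invSucc_congr
          ext u
          simp only [hS', mem_filter, mem_erase]
          constructor
          · rintro ⟨⟨_, hu⟩, h0⟩; exact ⟨hu, h0⟩
          · rintro ⟨hu, h0⟩
            refine ⟨⟨?_, hu⟩, h0⟩
            rintro rfl
            exact absurd (hcs.trans_lt h0) (lt_irrefl _)
        · have hτσ' : τ < σ := lt_of_not_ge hcs
          have hττ0' : τ < τ0 := by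
            rcases lt_trichotomy τ τ0 with h | h | h
            · exact h
            · exact absurd h hττ0
            · exact absurd (hmax τ hτS h) hcs
          exact invSucc_erase_of_lt S σ τ τ0 hτ0S hττ0' hτ0σ
      -- abbreviate the summand
      set g : Finset ℝ → ℝ → ℝ := fun L τ => (1 / τ - invSucc L τ) *
        (w i / ∑ j ∈ Finset.univ.filter (fun j => T j ≤ τ), w j) * K0 with hg
      have key : ∑ τ ∈ S, g S τ = ∑ τ ∈ S', g S' τ := by
        have h1 : ∑ τ ∈ S, g S τ = g S σ + ∑ τ ∈ S', g S τ :=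
          (Finset.add_sum_erase S (g S) hσS).symm
        have h2 : ∑ τ ∈ S', g S τ = g S τ0 + ∑ τ ∈ S'.erase τ0, g S τ :=
          (Finset.add_sum_erase S' (g S) hτ0S').symm
        have h3 : ∑ τ ∈ S', g S' τ = g S' τ0 + ∑ τ ∈ S'.erase τ0, g S' τ :=
          (Finset.add_sum_erase S' (g S') hτ0S').symm
        have h4 : ∑ τ ∈ S'.erase τ0, g S τ = ∑ τ ∈ S'.erase τ0, g S' τ := by
          apply Finset.sum_congr rfl
          intro τ hτ
          have := hclaim3 τ (Finset.mem_of_mem_erase hτ) (mem_erase.1 hτ).1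

          simp only [hg, this]
        have h5 : g S σ + g S τ0 = g S' τ0 := by
          have e1 : invSucc S' τ0 = invSucc S σ := invSucc_congr hclaim2
          simp only [hg, hW, hinvτ0, e1]
          ring
        rw [h1, h2, h3, h4, ← add_assoc, h5]
      have hih : share K0 w T i = ∑ τ ∈ S', g S' τ :=
        ih S' (Finset.erase_ssubset hσS) (fun x hx =>
          mem_erase.2 ⟨fun e => hσA (e ▸ hx), hsub hx⟩)
          (fun σ' hσ' => hge σ' (Finset.mem_of_mem_erase hσ'))
      show share K0 w T i = ∑ τ ∈ S, g S τ
      rw [key]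
      exact hih

lemma share_mono {n : ℕ} (K0 : ℝ) (w : Fin n → ℝ) (hK0 : 0 ≤ K0) (hw : ∀ j, 0 < w j)
    (U V : Fin n → ℝ) (i : Fin n) (hUi : 0 < U i)
    (hle : ∀ j, U j ≤ V j) (hi : U i = V i) :
    share K0 w U i ≤ share K0 w V i := by
  set S : Finset ℝ := ((levels U).filter (fun τ => U i ≤ τ)) ∪
    ((levels V).filter (fun τ => V i ≤ τ)) with hSdef
  have hgeS : ∀ σ ∈ S, U i ≤ σ := by
    intro σ hσ
    rcases Finset.mem_union.1 hσ with h | h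
    · exact (mem_filter.1 h).2
    · exact hi ▸ (mem_filter.1 h).2
  have e1 := sum_refine K0 w U i hUi S Finset.subset_union_left hgeS
  have e2 := sum_refine K0 w V i (hi ▸ hUi) S Finset.subset_union_right
    (fun σ hσ => hi ▸ hgeS σ hσ)
  rw [e1, e2]
  apply Finset.sum_le_sum
  intro τ hτ
  have hτpos : 0 < τ := lt_of_lt_of_le hUi (hgeS τ hτ)
  have hSpos : ∀ u ∈ S, 0 < u := fun u hu => lt_of_lt_of_le hUi (hgeS u hu)
  have hc : 0 ≤ 1 / τ - invSucc S τ := sub_nonneg.2 (invSucc_le S τ hτpos hSpos)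
  have hsubW : (Finset.univ.filter (fun j => V j ≤ τ) : Finset (Fin n)) ⊆
      Finset.univ.filter (fun j => U j ≤ τ) := by
    intro j hj
    exact mem_filter.2 ⟨Finset.mem_univ j, (hle j).trans (mem_filter.1 hj).2⟩
  have hposV : (0 : ℝ) < ∑ j ∈ Finset.univ.filter (fun j => V j ≤ τ), w j := by
    apply Finset.sum_pos (fun j _ => hw j)
    exact ⟨i, mem_filter.2 ⟨Finset.mem_univ i, hi ▸ hgeS τ hτ⟩⟩
  have hWle : (∑ j ∈ Finset.univ.filter (fun j => V j ≤ τ), w j) ≤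
      ∑ j ∈ Finset.univ.filter (fun j => U j ≤ τ), w j :=
    Finset.sum_le_sum_of_subset_of_nonneg hsubW (fun j _ _ => (hw j).le)
  have hdiv : w i / (∑ j ∈ Finset.univ.filter (fun j => U j ≤ τ), w j) ≤
      w i / ∑ j ∈ Finset.univ.filter (fun j => V j ≤ τ), w j :=
    div_le_div_of_nonneg_left (hw i).le hposV hWle
  exact mul_le_mul_of_nonneg_right (mul_le_mul_of_nonneg_left hdiv hc) hK0

lemma strategy_pos {B K0 Ki Hi t : ℝ} (hB : 0 < B) (h : InStrategy B K0 Ki Hi t) :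
    0 < t := by
  obtain ⟨⟨z, rfl⟩, -, -⟩ := h
  positivity


theorem statement6 {n : ℕ} (B K0 : ℝ) (K H w : Fin n → ℝ)
    (hB : 0 < B) (hK0 : 0 < K0) (hK : ∀ i, 0 ≤ K i) (hH : ∀ i, 0 < H i)
    (hw : ∀ i, 0 < w i)
    (Tw : Fin n → ℝ) (hNE : IsNE B K0 K H w Tw)
    (hleast : ∀ Tstar : Fin n → ℝ, IsNE B K0 K H w Tstar → ∀ i, Tw i ≤ Tstar i) :
    ∀ Tstar : Fin n → ℝ, IsNE B K0 K H w Tstar →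
      ∀ i, indCost K0 K H w Tw i ≤ indCost K0 K H w Tstar i := by
  intro Tstar hNEs i
  have h1 : indCost K0 K H w Tw i ≤
      indCost K0 K H w (Function.update Tw i (Tstar i)) i :=
    hNE.2 i (Tstar i) (hNEs.1 i)
  refine h1.trans ?_
  set U : Fin n → ℝ := Function.update Tw i (Tstar i) with hU
  have hUi : U i = Tstar i := Function.update_self i (Tstar i) Tw
  have hle : ∀ j, U j ≤ Tstar j := by
    intro j
    by_cases hji : j = i
    · subst hji; rw [hUi]
    · rw [hU, Function.update_of_ne hji]
      exact hleast Tstar hNEs j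
  have hUipos : 0 < U i := hUi ▸ strategy_pos hB (hNEs.1 i)
  have hshare : share K0 w U i ≤ share K0 w Tstar i :=
    share_mono K0 w hK0.le hw U Tstar i hUipos hle hUi
  unfold indCost
  rw [hUi]
  linarith
end

section
/- (Price of anarchy upper bound for arbitrary rules.) Let x : Γ → ℝ_{≥0}^N be any cost allocation satisfying Σ_{i∈N} x_i(T) = K_0/T_min and x_i(T) ≤ K_0/T_i for every T ∈ Γ and every i ∈ N, and set f_i(T) = H_i T_i + K_i/T_i + x_i(T). Then every Nash equilibrium T^* ∈ Γ with respect to these costs satisfies C(T^*) ≤ (3/(2√2))·√n·C(T^c). -/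
open Finset

/-!
At equilibrium, retailer `i` could deviate to the power-of-two rounding `tᵢ` of
`√((K₀ + Kᵢ)/Hᵢ)`, where it pays at most the whole major cost `K₀/tᵢ`; since `tᵢ` is
within a factor `√2` of the minimiser of `Hᵢ t + (K₀ + Kᵢ)/t`, its equilibrium cost is at most
`(3/√2)·√(Hᵢ(K₀ + Kᵢ))`. The shares add up to `K₀/T_min`, so summing and applying
Cauchy–Schwarz bounds `C(T*)` by `(3/√2)·√n·√(Σ Hᵢ(K₀ + Kᵢ))`, while every policy costs at
least `2·√(Σ Hᵢ(K₀ + Kᵢ))` by AM–GM.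
-/

open Real

lemma isPOT_potRound (B b : ℝ) : IsPOT B (potRound B b) :=
  ⟨_, rfl⟩

lemma potRound_pos {B : ℝ} (hB : 0 < B) (b : ℝ) : 0 < potRound B b :=
  mul_pos (zpow_pos two_pos _) hB

lemma potRound_mem_Icc {B b : ℝ} (hB : 0 < B) (hb : 0 < b) :
    potRound B b ∈ Set.Icc (b / √2) (√2 * b) := by
  set r := logb 2 (b / B)
  have h2r : (2 : ℝ) ^ r = b / B := rpow_logb two_pos (by norm_num) (div_pos hb hB)
  have hround := abs_le.1 (abs_sub_round r)
  have hpot : potRound B b = (2 : ℝ) ^ ((round r : ℤ) : ℝ) * B := by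
    rw [potRound, rpow_intCast]
  have hsqrt : (2 : ℝ) ^ ((1 : ℝ) / 2) = √2 := (sqrt_eq_rpow 2).symm
  have hlow : (2 : ℝ) ^ (r - 1 / 2) ≤ (2 : ℝ) ^ ((round r : ℤ) : ℝ) :=
    rpow_le_rpow_of_exponent_le one_le_two (by linarith)
  have hupp : (2 : ℝ) ^ ((round r : ℤ) : ℝ) ≤ (2 : ℝ) ^ (r + 1 / 2) :=
    rpow_le_rpow_of_exponent_le one_le_two (by linarith)
  rw [rpow_sub two_pos, h2r, hsqrt] at hlow
  rw [rpow_add two_pos, h2r, hsqrt] at hupp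
  rw [hpot]
  constructor
  · calc b / √2 = b / B / √2 * B := by field_simp
      _ ≤ _ := by gcongr
  · calc _ ≤ b / B * √2 * B := by gcongr
      _ = √2 * b := by field_simp

lemma inStrategy_potRound {B K0 Ki Hi : ℝ} (hB : 0 < B) (hK0 : 0 < K0) (hKi : 0 ≤ Ki)
    (hHi : 0 < Hi) : InStrategy B K0 Ki Hi (potRound B √((K0 + Ki) / Hi)) := by
  have hb : 0 < √((K0 + Ki) / Hi) := sqrt_pos.2 (by positivity)
  obtain ⟨hlow, hupp⟩ := potRound_mem_Icc hB hb
  refine ⟨isPOT_potRound _ _, ?_, ?_⟩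
  · calc √(Ki / (2 * Hi)) ≤ √((K0 + Ki) / Hi / 2) := by
          rw [div_div, mul_comm Hi]; gcongr; linarith
      _ = √((K0 + Ki) / Hi) / √2 := sqrt_div' _ zero_le_two
      _ ≤ _ := hlow
  · calc _ ≤ √2 * √((K0 + Ki) / Hi) := hupp
      _ = √(2 * (K0 + Ki) / Hi) := by rw [← sqrt_mul zero_le_two, mul_div_assoc]

lemma mul_add_div_le_of_mem_Icc {h M t : ℝ} (hh : 0 < h) (hM : 0 < M)
    (ht : t ∈ Set.Icc (√(M / h) / √2) (√2 * √(M / h))) :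
    h * t + M / t ≤ 3 / √2 * √(h * M) := by
  set a := √(M / h)
  have ha : 0 < a := sqrt_pos.2 (div_pos hM hh)
  have hs : 0 < √2 := sqrt_pos.2 two_pos
  have hs2 : √2 * √2 = 2 := mul_self_sqrt zero_le_two
  have hMa : M = h * a ^ 2 := by rw [sq_sqrt (div_pos hM hh).le]; field_simp
  have hhM : √(h * M) = h * a := by
    rw [hMa, show h * (h * a ^ 2) = (h * a) ^ 2 by ring, sqrt_sq (by positivity)]
  have htpos : 0 < t := lt_of_lt_of_le (by positivity) ht.1
  -- `t² - (3/√2) a t + a² = (t - a/√2)(t - √2 a) ≤ 0`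
  have hquad : (t - a / √2) * (t - √2 * a) ≤ 0 :=
    mul_nonpos_of_nonneg_of_nonpos (sub_nonneg.2 ht.1) (sub_nonpos.2 ht.2)
  rw [hhM, hMa, ← sub_nonneg]
  have hexpand : 3 / √2 * (h * a) - (h * t + h * a ^ 2 / t) =
      -(h / t) * ((t - a / √2) * (t - √2 * a)) := by
    field_simp
    linear_combination (-(a * t)) * hs2
  rw [hexpand]
  exact mul_nonneg_of_nonpos_of_nonpos (neg_nonpos.2 (by positivity)) hquad

lemma sum_sqrt_le_sqrt_card_mul_sqrt_sum {ι : Type*} (s : Finset ι) {f : ι → ℝ}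
    (hf : ∀ i, 0 ≤ f i) : ∑ i ∈ s, √(f i) ≤ √(#s : ℝ) * √(∑ i ∈ s, f i) := by
  simpa [mul_comm] using sum_sqrt_mul_sqrt_le s hf (g := fun _ ↦ 1) fun _ ↦ zero_le_one

lemma sum_mul_le_sum_mul_sum {ι R : Type*} [CommSemiring R] [PartialOrder R] [IsOrderedRing R]
    (s : Finset ι) {f g : ι → R} (hf : ∀ i ∈ s, 0 ≤ f i) (hg : ∀ i ∈ s, 0 ≤ g i) :
    ∑ i ∈ s, f i * g i ≤ (∑ i ∈ s, f i) * ∑ i ∈ s, g i := by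
  rw [sum_mul]
  exact sum_le_sum fun i hi ↦ mul_le_mul_of_nonneg_left (single_le_sum hg hi) (hf i hi)

section SystemCost

variable {n : ℕ} {K0 : ℝ} {K H T : Fin n → ℝ}

lemma sysCost_eq_sum_of_sum_eq {x : Fin n → ℝ} (hx : ∑ i, x i = K0 / ⨅ i, T i) :
    sysCost K0 K H T = ∑ i, (H i * T i + K i / T i + x i) := by
  rw [sysCost, ← hx, ← sum_add_distrib]

lemma two_sqrt_sum_le_sysCost (hn : 0 < n) (hK0 : 0 ≤ K0) (hK : ∀ i, 0 ≤ K i)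
    (hH : ∀ i, 0 ≤ H i) (hT : ∀ i, 0 < T i) :
    2 * √(∑ i, H i * (K0 + K i)) ≤ sysCost K0 K H T := by
  have : Nonempty (Fin n) := ⟨⟨0, hn⟩⟩
  obtain ⟨i₀, hi₀⟩ := exists_eq_ciInf_of_finite (f := T)
  set τ := ⨅ i, T i
  have hτ : 0 < τ := hi₀ ▸ hT i₀
  have hτle (i : Fin n) : τ ≤ T i := ciInf_le (Finite.bddBelow_range T) i
  set P := ∑ i, H i * T i
  set Q := ∑ i, K i / T i
  have hP : 0 ≤ P := sum_nonneg fun i _ ↦ mul_nonneg (hH i) (hT i).le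
  have hQ : 0 ≤ Q := sum_nonneg fun i _ ↦ div_nonneg (hK i) (hT i).le
  have hHK : ∑ i, H i * K i ≤ P * Q :=
    calc ∑ i, H i * K i = ∑ i, H i * T i * (K i / T i) :=
          sum_congr rfl fun i _ ↦ by field_simp [(hT i).ne']
      _ ≤ P * Q := sum_mul_le_sum_mul_sum _ (fun i _ ↦ mul_nonneg (hH i) (hT i).le)
          fun i _ ↦ div_nonneg (hK i) (hT i).le
  have hHK0 : K0 * ∑ i, H i ≤ P * (K0 / τ) := by
    have hτP : τ * ∑ i, H i ≤ P := by
      rw [mul_sum]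
      exact sum_le_sum fun i _ ↦ by nlinarith [hH i, hτle i]
    calc K0 * ∑ i, H i = (τ * ∑ i, H i) * (K0 / τ) := by field_simp
      _ ≤ P * (K0 / τ) := by gcongr
  have hsum : ∑ i, H i * (K0 + K i) ≤ P * (Q + K0 / τ) := by
    have hsplit : ∑ i, H i * (K0 + K i) = K0 * ∑ i, H i + ∑ i, H i * K i := by
      rw [mul_sum, ← sum_add_distrib]
      exact sum_congr rfl fun i _ ↦ by ring
    rw [hsplit, mul_add]
    linarith
  have hcost : sysCost K0 K H T = P + (Q + K0 / τ) := by
    rw [sysCost, sum_add_distrib]; ring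
  rw [hcost]
  calc 2 * √(∑ i, H i * (K0 + K i)) ≤ 2 * √(P * (Q + K0 / τ)) := by gcongr
    _ ≤ P + (Q + K0 / τ) := by
      have hamgm : √(P * (Q + K0 / τ)) ≤ (P + (Q + K0 / τ)) / 2 :=
        sqrt_le_iff.2 ⟨by positivity, by nlinarith [sq_nonneg (P - (Q + K0 / τ))]⟩
      linarith

end SystemCost

theorem statement7_general {n : ℕ} (hn : 0 < n) (B K0 : ℝ) (K H : Fin n → ℝ)
    (hB : 0 < B) (hK0 : 0 < K0) (hK : ∀ i, 0 ≤ K i) (hH : ∀ i, 0 < H i)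
    (x : (Fin n → ℝ) → Fin n → ℝ)
    (hxsum : ∀ T : Fin n → ℝ, (∀ j, InStrategy B K0 (K j) (H j) (T j)) →
      ∑ i, x T i = K0 / (⨅ i, T i))
    (hxub : ∀ T : Fin n → ℝ, (∀ j, InStrategy B K0 (K j) (H j) (T j)) →
      ∀ i, x T i ≤ K0 / T i)
    (Tstar : Fin n → ℝ) (hmem : ∀ j, InStrategy B K0 (K j) (H j) (Tstar j))
    (hNE : ∀ i t, InStrategy B K0 (K i) (H i) t →
      H i * Tstar i + K i / Tstar i + x Tstar i ≤
        H i * t + K i / t + x (Function.update Tstar i t) i) :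
    sysCost K0 K H Tstar ≤
      3 / (2 * Real.sqrt 2) * Real.sqrt n * sysCost K0 K H (Tc n B K0 K H) := by
  have hM (i : Fin n) : 0 < K0 + K i := by linarith [hK i]
  have hcost_le (i : Fin n) :
      H i * Tstar i + K i / Tstar i + x Tstar i ≤ 3 / √2 * √(H i * (K0 + K i)) := by
    set t := potRound B √((K0 + K i) / H i)
    have ht : InStrategy B K0 (K i) (H i) t := inStrategy_potRound hB hK0 (hK i) (hH i)
    have hshare : x (Function.update Tstar i t) i ≤ K0 / t := by
      simpa using hxub _ ((Function.forall_update_iff Tstar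
        fun j s ↦ InStrategy B K0 (K j) (H j) s).2 ⟨ht, fun j _ ↦ hmem j⟩) i
    calc _ ≤ H i * t + K i / t + x (Function.update Tstar i t) i := hNE i t ht
      _ ≤ H i * t + (K0 + K i) / t := by rw [add_div]; linarith
      _ ≤ _ := mul_add_div_le_of_mem_Icc (hH i) (hM i)
          (potRound_mem_Icc hB (sqrt_pos.2 (div_pos (hM i) (hH i))))
  have hTc (i : Fin n) : 0 < Tc n B K0 K H i := by
    unfold Tc; split <;> exact potRound_pos hB _
  have hlower := two_sqrt_sum_le_sysCost hn hK0.le hK (fun i ↦ (hH i).le) hTc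
  calc sysCost K0 K H Tstar = ∑ i, (H i * Tstar i + K i / Tstar i + x Tstar i) :=
        sysCost_eq_sum_of_sum_eq (hxsum Tstar hmem)
    _ ≤ ∑ i, 3 / √2 * √(H i * (K0 + K i)) := sum_le_sum fun i _ ↦ hcost_le i
    _ = 3 / √2 * ∑ i, √(H i * (K0 + K i)) := (mul_sum ..).symm
    _ ≤ 3 / √2 * (√n * √(∑ i, H i * (K0 + K i))) := by
        gcongr
        simpa using sum_sqrt_le_sqrt_card_mul_sqrt_sum univ
          fun i ↦ mul_nonneg (hH i).le (hM i).le
    _ ≤ 3 / √2 * (√n * (sysCost K0 K H (Tc n B K0 K H) / 2)) := by gcongr; linarith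
    _ = _ := by ring

theorem statement7 {n : ℕ} (hn : 0 < n) (B K0 : ℝ) (K H : Fin n → ℝ)
    (hB : 0 < B) (hK0 : 0 < K0) (hK : ∀ i, 0 ≤ K i) (hH : ∀ i, 0 < H i)
    (x : (Fin n → ℝ) → Fin n → ℝ)
    (hx0 : ∀ T : Fin n → ℝ, (∀ j, InStrategy B K0 (K j) (H j) (T j)) → ∀ i, 0 ≤ x T i)
    (hxsum : ∀ T : Fin n → ℝ, (∀ j, InStrategy B K0 (K j) (H j) (T j)) →
      ∑ i, x T i = K0 / (⨅ i, T i))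
    (hxub : ∀ T : Fin n → ℝ, (∀ j, InStrategy B K0 (K j) (H j) (T j)) →
      ∀ i, x T i ≤ K0 / T i)
    (Tstar : Fin n → ℝ) (hmem : ∀ j, InStrategy B K0 (K j) (H j) (Tstar j))
    (hNE : ∀ i t, InStrategy B K0 (K i) (H i) t →
      H i * Tstar i + K i / Tstar i + x Tstar i ≤
        H i * t + K i / t + x (Function.update Tstar i t) i) :
    sysCost K0 K H Tstar ≤
      3 / (2 * Real.sqrt 2) * Real.sqrt n * sysCost K0 K H (Tc n B K0 K H) :=
  statement7_general hn B K0 K H hB hK0 hK hH x hxsum hxub Tstar hmem hNE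
end
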